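/- arXiv:2108.09989 — 7 statements merged into one kernel-verified Lean document; each statement's English description precedes it below -/
import Mathlib

section
/- Let H be a uniformly random m × n matrix over F_q, A ⊂ {1,...,n} with |A| = s, and H_A the m × s submatrix of columns indexed by A. Then for integers j, r with 0 ≤ j ≤ n and max(0, s-n+j) ≤ r ≤ min(j,s), the probability that rk(H) = j and rk(H_A) = r equals q^{-m(n-j)+r(n-j-s+r)} · ψ_m(j) · [s choose r]_q · [n-s choose j-r]_q. -/
/-!
Read `H` through its columns in `F^m`. The columns indexed by `A` span a subspace `W` of dimension
`r`, and then `rk H = j` says exactly that the images of the other `n - s` columns in `F^m ⧸ W`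
span a subspace of dimension `j - r`; lifting from the quotient costs a factor `q^{r(n-s)}`.
Both counts are instances of the number `q^{md} ψ_m(d) [t choose d]_q` of `t`-tuples in an
`m`-dimensional space whose span has dimension `d`, which comes from double counting the pairs
(tuple, basis of its span): a `d`-dimensional space has `∏_{i<d} (q^d - q^i)` bases and is spanned
by `∏_{i<d} (q^t - q^i)` of the `t`-tuples in it, the latter by transposition.
-/

/-- `ψ_m(j) = ∏_{k=0}^{j-1} (1 - q^{k-m})`. -/
noncomputable def psi (q : ℝ) (m j : ℕ) : ℝ :=
  ∏ k ∈ Finset.range j, (1 - q ^ ((k : ℤ) - (m : ℤ)))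

/-- The Gaussian binomial coefficient `[n choose j]_q`. -/
noncomputable def gaussBinom (q : ℝ) (n j : ℕ) : ℝ :=
  ∏ k ∈ Finset.range j, (1 - q ^ (n - j + k + 1)) / (1 - q ^ (k + 1))

open Module Submodule

section QAnalogues

variable {Q : ℝ}

lemma psi_eq_zero_of_lt {m j : ℕ} (h : m < j) : psi Q m j = 0 :=
  Finset.prod_eq_zero (Finset.mem_range.mpr h) (by simp)

lemma psi_mul_psi_sub {m r j : ℕ} (hrm : r ≤ m) (hrj : r ≤ j) :
    psi Q m r * psi Q (m - r) (j - r) = psi Q m j := by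
  obtain ⟨d, rfl⟩ := Nat.exists_eq_add_of_le hrj
  rw [Nat.add_sub_cancel_left, psi, psi, psi, Finset.prod_range_add]
  congr 1
  refine Finset.prod_congr rfl fun k _ => ?_
  push_cast [Nat.cast_sub hrm]
  ring_nf

lemma prod_range_pow_sub_pow (hQ : Q ≠ 0) (m d : ℕ) :
    ∏ i ∈ Finset.range d, (Q ^ m - Q ^ i) = Q ^ (m * d) * psi Q m d := by
  have hterm (i : ℕ) : Q ^ m - Q ^ i = Q ^ m * (1 - Q ^ ((i : ℤ) - m)) := by
    rw [mul_sub, mul_one, zpow_sub₀ hQ, zpow_natCast, zpow_natCast,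
      mul_div_cancel₀ _ (pow_ne_zero _ hQ)]
  rw [Finset.prod_congr rfl fun i _ => hterm i, Finset.prod_mul_distrib, Finset.prod_const,
    Finset.card_range, ← pow_mul, psi]

lemma prod_range_div_eq_gaussBinom (hQ : Q ≠ 0) {t d : ℕ} (hdt : d ≤ t) :
    ∏ i ∈ Finset.range d, (Q ^ t - Q ^ i) / (Q ^ d - Q ^ i) = gaussBinom Q t d := by
  rw [gaussBinom, ← Finset.prod_range_reflect]
  refine Finset.prod_congr rfl fun k hk => ?_
  have hk : k < d := Finset.mem_range.mp hk
  have ht : Q ^ t = Q ^ (t - d + k + 1) * Q ^ (d - 1 - k) := by rw [← pow_add]; congr 1; omega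
  have hd : Q ^ d = Q ^ (k + 1) * Q ^ (d - 1 - k) := by rw [← pow_add]; congr 1; omega
  rw [ht, hd, ← sub_one_mul, ← sub_one_mul, mul_div_mul_right _ _ (pow_ne_zero _ hQ),
    ← neg_div_neg_eq, neg_sub, neg_sub]

lemma pow_mul_psi_mul_pow_mul_psi_div (hQ : Q ≠ 0) {m n s j r : ℕ} (hrj : r ≤ j)
    (hsn : s ≤ n) :
    Q ^ (m * r) * psi Q m r * (Q ^ ((m - r) * (j - r)) * psi Q (m - r) (j - r) * Q ^ (r * (n - s)))
        / Q ^ (m * n)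
      = Q ^ (-(m : ℤ) * (n - j) + r * (n - j - s + r)) * psi Q m j := by
  rcases le_or_gt r m with hrm | hmr
  · have hexp : Q ^ (-(m : ℤ) * (n - j) + r * (n - j - s + r)) * Q ^ (m * n)
        = Q ^ (m * r) * Q ^ ((m - r) * (j - r)) * Q ^ (r * (n - s)) := by
      rw [← zpow_natCast Q (m * n), ← zpow_add₀ hQ, ← pow_add, ← pow_add, ← zpow_natCast]
      push_cast [Nat.cast_sub hrm, Nat.cast_sub hrj, Nat.cast_sub hsn]
      ring_nf
    rw [← psi_mul_psi_sub hrm hrj, div_eq_iff (pow_ne_zero _ hQ)]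
    linear_combination (-(psi Q m r * psi Q (m - r) (j - r))) * hexp
  -- for `m < r` both sides vanish, whatever the truncated `m - r` is
  · rw [psi_eq_zero_of_lt hmr, psi_eq_zero_of_lt (hmr.trans_le hrj)]
    ring

end QAnalogues

lemma card_subtype_prod_of_card_fiber_eq {R α β : Type*} [CommSemiring R] [Finite α] [Finite β]
    {P : α → Prop} {Q : α → β → Prop} {c : R} (h : ∀ a, P a → (Nat.card {b // Q a b} : R) = c) :
    (Nat.card {x : α × β // P x.1 ∧ Q x.1 x.2} : R) = Nat.card {a // P a} * c := by
  let e : {x : α × β // P x.1 ∧ Q x.1 x.2} ≃ Σ a : {a // P a}, {b // Q a b} :=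
    { toFun x := ⟨⟨x.1.1, x.2.1⟩, ⟨x.1.2, x.2.2⟩⟩
      invFun y := ⟨(y.1.1, y.2.1), y.1.2, y.2.2⟩
      left_inv _ := rfl
      right_inv _ := rfl }
  have : Fintype {a // P a} := Fintype.ofFinite _
  rw [Nat.card_congr e, Nat.card_sigma, Nat.cast_sum,
    Finset.sum_congr rfl fun (a : {a // P a}) _ => h a a.2, Finset.sum_const, Finset.card_univ,
    nsmul_eq_mul, Nat.card_eq_fintype_card]

section Families

variable {K V ι : Type*} [Field K] [AddCommGroup V] [Module K V]

lemma span_range_eq_top_iff_linearIndependent_transpose {κ : Type*} [Fintype ι] [Fintype κ]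
    (w : ι → κ → K) : span K (Set.range w) = ⊤ ↔ LinearIndependent K (fun k i => w i k) := by
  have hrow : (Matrix.of w).rank = finrank K (span K (Set.range w)) :=
    Matrix.rank_eq_finrank_span_row _
  have hcol : (Matrix.of w).rank = finrank K (span K (Set.range fun k i => w i k)) :=
    Matrix.rank_eq_finrank_span_cols _
  rw [eq_top_iff_finrank_eq, linearIndependent_iff_card_eq_finrank_span, Set.finrank, ← hcol,
    hrow, finrank_fintype_fun_eq_card, eq_comm]

lemma span_range_subtype_comp_eq_iff (U : Submodule K V) (w : ι → U) :
    span K (Set.range (U.subtype ∘ w)) = U ↔ span K (Set.range w) = ⊤ := by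
  rw [Set.range_comp, ← map_span]
  exact ⟨fun h => map_injective_of_injective U.injective_subtype
    (h.trans (map_subtype_top U).symm), fun h => h ▸ map_subtype_top U⟩

lemma card_subtype_span_range_eq (U : Submodule K V) (p : (ι → V) → Prop) :
    Nat.card {w : ι → V // p w ∧ span K (Set.range w) = U}
      = Nat.card {w : ι → U // p (U.subtype ∘ w) ∧ span K (Set.range w) = ⊤} := by
  refine Nat.card_congr
    { toFun w := ⟨fun i => ⟨w.1 i, w.2.2.le (subset_span ⟨i, rfl⟩)⟩, w.2.1,
        (span_range_subtype_comp_eq_iff U _).mp w.2.2⟩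
      invFun w := ⟨U.subtype ∘ w.1, w.2.1, (span_range_subtype_comp_eq_iff U _).mpr w.2.2⟩
      left_inv _ := rfl
      right_inv _ := rfl }

lemma finrank_sup_eq_add_finrank_map_mkQ [FiniteDimensional K V] (W S : Submodule K V) :
    finrank K ↥(W ⊔ S) = finrank K W + finrank K (S.map W.mkQ) := by
  have hrange : LinearMap.range (W.mkQ.domRestrict (W ⊔ S)) = S.map W.mkQ := by
    rw [LinearMap.range_domRestrict, Submodule.map_sup, mkQ_map_self, bot_sup_eq]
  have hker : finrank K (LinearMap.ker (W.mkQ.domRestrict (W ⊔ S))) = finrank K W := by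
    rw [LinearMap.ker_domRestrict, ker_mkQ]
    exact (comapSubtypeEquivOfLe le_sup_left).finrank_eq
  rw [← hrange, ← hker, add_comm]
  exact (LinearMap.finrank_range_add_finrank_ker _).symm

lemma card_subtype_mkQ_comp [Finite ι] (W : Submodule K V) (P : (ι → V ⧸ W) → Prop) :
    Nat.card {w : ι → V // P (W.mkQ ∘ w)} = Nat.card {u // P u} * Nat.card W ^ Nat.card ι := by
  obtain ⟨C, hC⟩ := W.exists_isCompl
  let e : V ≃ₗ[K] (V ⧸ W) × W := W.mkQ.equivProdOfSurjectiveOfIsCompl (W.projectionOnto C hC)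
    (range_mkQ W) (range_projectionOnto hC) (by rwa [ker_mkQ, ker_projectionOnto])
  let E : (ι → V) ≃ (ι → V ⧸ W) × (ι → W) :=
    (Equiv.arrowCongr (Equiv.refl ι) e.toEquiv).trans (Equiv.arrowProdEquivProdArrow _ _ _)
  rw [← Nat.card_fun, ← Nat.card_prod]
  exact Nat.card_congr
    ((E.subtypeEquiv fun w => Iff.rfl).trans Equiv.prodSubtypeFstEquivSubtypeProd)

lemma span_range_eq_sup_span_range_compl (w : ι → V) (p : ι → Prop) :
    span K (Set.range w) = span K (Set.range fun i : {i // p i} => w i)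
      ⊔ span K (Set.range fun i : {i // ¬p i} => w i) := by
  rw [← span_union]
  congr 1
  ext v
  simp only [Set.mem_range, Set.mem_union, Subtype.exists, exists_prop]
  constructor
  · rintro ⟨i, rfl⟩
    by_cases hi : p i
    exacts [Or.inl ⟨i, hi, rfl⟩, Or.inr ⟨i, hi, rfl⟩]
  · rintro (⟨i, -, rfl⟩ | ⟨i, -, rfl⟩) <;> exact ⟨i, rfl⟩

lemma card_rank_and_rank_submatrix_eq {μ : Type*} [Fintype μ] [Fintype ι]
    (A : Finset ι) (j r : ℕ) :
    Nat.card {H : Matrix μ ι K // H.rank = j ∧ (H.submatrix id ((↑) : A → ι)).rank = r}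
      = Nat.card {x : (A → μ → K) × ({i // i ∉ A} → μ → K) //
          finrank K (span K (Set.range x.1)) = r ∧
            finrank K ↥(span K (Set.range x.1) ⊔ span K (Set.range x.2)) = j} := by
  classical
  let cols : Matrix μ ι K ≃ (A → μ → K) × ({i // i ∉ A} → μ → K) :=
    (Matrix.transposeAddEquiv μ ι K).toEquiv.trans (Equiv.piEquivPiSubtypeProd (· ∈ A) _)
  refine Nat.card_congr (cols.subtypeEquiv fun H => ?_)
  rw [Matrix.rank_eq_finrank_span_cols, Matrix.rank_eq_finrank_span_cols,
    span_range_eq_sup_span_range_compl _ (· ∈ A), and_comm]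
  rfl

end Families

section FiniteField

variable {F V ι : Type*} [Field F] [Fintype F] [AddCommGroup V] [Module F V] [Finite V]
  [Fintype ι]

local notation "q" => Fintype.card F

lemma card_linearIndependent_eq_prod_range (d : ℕ) :
    (Nat.card {b : Fin d → V // LinearIndependent F b} : ℝ)
      = ∏ i ∈ Finset.range d, ((q : ℝ) ^ finrank F V - q ^ i) := by
  rcases le_or_gt d (finrank F V) with hd | hd
  · rw [card_linearIndependent hd, Nat.cast_prod, Fin.prod_univ_eq_prod_range
      (fun i => ((q ^ finrank F V - q ^ i : ℕ) : ℝ))]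
    refine Finset.prod_congr rfl fun i hi => ?_
    rw [Nat.cast_sub (Nat.pow_le_pow_right Fintype.card_pos
      ((Finset.mem_range.mp hi).le.trans hd))]
    push_cast
    rfl
  · have : IsEmpty {b : Fin d → V // LinearIndependent F b} :=
      ⟨fun b => hd.not_ge (by simpa using b.2.fintype_card_le_finrank)⟩
    rw [Nat.card_of_isEmpty, Nat.cast_zero, eq_comm]
    exact Finset.prod_eq_zero (Finset.mem_range.mpr hd) (sub_self _)

lemma card_span_range_eq (U : Submodule F V) :
    (Nat.card {w : ι → V // span F (Set.range w) = U} : ℝ)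
      = ∏ i ∈ Finset.range (finrank F U), ((q : ℝ) ^ Fintype.card ι - q ^ i) := by
  let e := (Module.finBasisOfFinrankEq F U rfl).equivFun
  have hcard : Nat.card {w : ι → V // span F (Set.range w) = U}
      = Nat.card {v : Fin (finrank F U) → ι → F // LinearIndependent F v} := by
    have hU := card_subtype_span_range_eq (ι := ι) U fun _ => True
    simp only [true_and] at hU
    rw [hU]
    refine Nat.card_congr
      (((Equiv.arrowCongr (Equiv.refl ι) e.toEquiv).trans (Equiv.piComm _)).subtypeEquiv
        fun w => ?_)
    rw [← span_range_eq_top_iff_linearIndependent_transpose, ← Submodule.map_eq_top_iff (e := e),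
      map_span, ← Set.range_comp]
    rfl
  rw [hcard, card_linearIndependent_eq_prod_range, finrank_fintype_fun_eq_card]

lemma card_linearIndependent_span_range_eq (U : Submodule F V) :
    (Nat.card {b : Fin (finrank F U) → V // LinearIndependent F b ∧ span F (Set.range b) = U} : ℝ)
      = ∏ i ∈ Finset.range (finrank F U), ((q : ℝ) ^ finrank F U - q ^ i) := by
  rw [card_subtype_span_range_eq, ← card_linearIndependent_eq_prod_range]
  congr 1
  refine Nat.card_congr (Equiv.subtypeEquivRight fun b => ?_)
  rw [LinearMap.linearIndependent_iff _ U.ker_subtype, and_iff_left_iff_imp]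
  exact fun hb => hb.span_eq_top_of_card_eq_finrank' (Fintype.card_fin _)

lemma card_finrank_span_range_mul (d : ℕ) :
    (Nat.card {w : ι → V // finrank F (span F (Set.range w)) = d} : ℝ)
        * ∏ i ∈ Finset.range d, ((q : ℝ) ^ d - q ^ i)
      = (∏ i ∈ Finset.range d, ((q : ℝ) ^ finrank F V - q ^ i))
        * ∏ i ∈ Finset.range d, ((q : ℝ) ^ Fintype.card ι - q ^ i) := by
  -- count the pairs `(w, b)` with `b` a basis of the span of `w`, fibred over `w` and over `b`
  have hbases := card_subtype_prod_of_card_fiber_eq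
    (Q := fun w (b : Fin d → V) =>
      LinearIndependent F b ∧ span F (Set.range b) = span F (Set.range w))
    (c := ∏ i ∈ Finset.range d, ((q : ℝ) ^ d - q ^ i))
    fun (w : ι → V) (hw : finrank F (span F (Set.range w)) = d) => by
      subst hw
      exact card_linearIndependent_span_range_eq _
  have hspans := card_subtype_prod_of_card_fiber_eq
    (Q := fun b (w : ι → V) => span F (Set.range w) = span F (Set.range b))
    (c := ∏ i ∈ Finset.range d, ((q : ℝ) ^ Fintype.card ι - q ^ i))
    fun (b : Fin d → V) (hb : LinearIndependent F b) => by
      rw [card_span_range_eq, finrank_span_eq_card hb, Fintype.card_fin]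
  rw [← hbases, ← card_linearIndependent_eq_prod_range, ← hspans, Nat.cast_inj]
  refine Nat.card_congr ((Equiv.prodComm _ _).subtypeEquiv fun x => ?_)
  refine ⟨fun ⟨_, hb, hspan⟩ => ⟨hb, hspan.symm⟩, fun ⟨hb, hspan⟩ => ⟨?_, hb, hspan.symm⟩⟩
  change LinearIndependent F x.2 at hb
  change span F (Set.range x.1) = span F (Set.range x.2) at hspan
  rw [hspan, finrank_span_eq_card hb, Fintype.card_fin]

lemma card_finrank_span_range_eq {d : ℕ} (hd : d ≤ Fintype.card ι) :
    (Nat.card {w : ι → V // finrank F (span F (Set.range w)) = d} : ℝ)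
      = q ^ (finrank F V * d) * psi q (finrank F V) d * gaussBinom q (Fintype.card ι) d := by
  have hq : (1 : ℝ) < q := by exact_mod_cast Fintype.one_lt_card
  have hne : ∏ i ∈ Finset.range d, ((q : ℝ) ^ d - q ^ i) ≠ 0 :=
    Finset.prod_ne_zero_iff.mpr fun i hi =>
      sub_ne_zero.mpr (pow_lt_pow_right₀ hq (Finset.mem_range.mp hi)).ne'
  rw [eq_div_of_mul_eq hne (card_finrank_span_range_mul d), mul_div_assoc,
    ← Finset.prod_div_distrib, prod_range_pow_sub_pow (by positivity),
    prod_range_div_eq_gaussBinom (by positivity) hd]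

lemma card_finrank_sup_span_range_eq (W : Submodule F V) {j : ℕ} (hWj : finrank F W ≤ j) :
    Nat.card {w : ι → V // finrank F ↥(W ⊔ span F (Set.range w)) = j}
      = Nat.card {u : ι → V ⧸ W // finrank F (span F (Set.range u)) = j - finrank F W}
        * q ^ (finrank F W * Fintype.card ι) := by
  have hcond (w : ι → V) : finrank F ↥(W ⊔ span F (Set.range w)) = j
      ↔ finrank F (span F (Set.range (W.mkQ ∘ w))) = j - finrank F W := by
    rw [finrank_sup_eq_add_finrank_map_mkQ, map_span, Set.range_comp]
    omega
  rw [Nat.card_congr (Equiv.subtypeEquivRight hcond),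
    card_subtype_mkQ_comp W fun u => finrank F (span F (Set.range u)) = j - finrank F W,
    Nat.card_eq_fintype_card (α := ι), pow_mul]
  have : Fintype W := Fintype.ofFinite W
  rw [Nat.card_eq_fintype_card (α := W), card_eq_pow_finrank (K := F)]

end FiniteField

theorem stmt_2_general (q m n s j r : ℕ) (F : Type) [Field F] [Fintype F]
    (hq : Fintype.card F = q) (A : Finset (Fin n)) (hA : A.card = s)
    (hr1 : s + j ≤ n + r) (hr2 : r ≤ min j s) :
    (Nat.card {H : Matrix (Fin m) (Fin n) F //
        H.rank = j ∧ (H.submatrix id ((↑) : A → Fin n)).rank = r} : ℝ)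
        / (q : ℝ) ^ (m * n)
      = (q : ℝ) ^ (-(m : ℤ) * ((n : ℤ) - (j : ℤ))
            + (r : ℤ) * ((n : ℤ) - (j : ℤ) - (s : ℤ) + (r : ℤ)))
          * psi q m j * gaussBinom q s r * gaussBinom q (n - s) (j - r) := by
  subst hq
  have hrj : r ≤ j := hr2.trans (min_le_left _ _)
  have hrs : r ≤ s := hr2.trans (min_le_right _ _)
  have hcardA : Fintype.card A = s := by rw [Fintype.card_coe, hA]
  have hcardAc : Fintype.card {i // i ∉ A} = n - s := by
    rw [Fintype.card_subtype_compl, Fintype.card_fin, hcardA]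
  have hfiber (wA : A → Fin m → F) (hwA : finrank F (span F (Set.range wA)) = r) :
      (Nat.card {wB : {i // i ∉ A} → Fin m → F //
          finrank F ↥(span F (Set.range wA) ⊔ span F (Set.range wB)) = j} : ℝ)
        = Fintype.card F ^ ((m - r) * (j - r)) * psi (Fintype.card F) (m - r) (j - r)
          * Fintype.card F ^ (r * (n - s)) * gaussBinom (Fintype.card F) (n - s) (j - r) := by
    have hquot : finrank F ((Fin m → F) ⧸ span F (Set.range wA)) = m - r := by
      rw [finrank_quotient, finrank_fin_fun, hwA]
    rw [card_finrank_sup_span_range_eq _ (hwA.trans_le hrj), Nat.cast_mul,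
      card_finrank_span_range_eq (by omega), hquot, hwA, hcardAc]
    push_cast
    ring
  rw [card_rank_and_rank_submatrix_eq, card_subtype_prod_of_card_fiber_eq hfiber,
    card_finrank_span_range_eq (by omega), finrank_fin_fun, hcardA,
    ← pow_mul_psi_mul_pow_mul_psi_div (by positivity) hrj (by omega)]
  ring

/-- For a uniformly random `m × n` matrix `H` over `F_q`, `A ⊆ [n]` with `|A| = s`, and
`H_A` the submatrix of columns indexed by `A`: for `0 ≤ j ≤ n` and
`max(0, s-n+j) ≤ r ≤ min(j,s)`, the probability that `rk(H) = j` and `rk(H_A) = r`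
equals `q^{-m(n-j)+r(n-j-s+r)} ψ_m(j) [s choose r]_q [n-s choose j-r]_q`. -/
theorem stmt_2 (q m n s j r : ℕ) (F : Type) [Field F] [Fintype F]
    (hq : Fintype.card F = q) (A : Finset (Fin n)) (hA : A.card = s)
    (hj : j ≤ n) (hr1 : s + j ≤ n + r) (hr2 : r ≤ min j s) :
    (Nat.card {H : Matrix (Fin m) (Fin n) F //
        H.rank = j ∧ (H.submatrix id ((↑) : A → Fin n)).rank = r} : ℝ)
        / (q : ℝ) ^ (m * n)
      = (q : ℝ) ^ (-(m : ℤ) * ((n : ℤ) - (j : ℤ))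
            + (r : ℤ) * ((n : ℤ) - (j : ℤ) - (s : ℤ) + (r : ℤ)))
          * psi q m j * gaussBinom q s r * gaussBinom q (n - s) (j - r) :=
  stmt_2_general q m n s j r F hq A hA hr1 hr2
end

section
/- Let H be a uniformly random m × n matrix over F_q, and let E, E' ⊂ {1,...,n} with |E| = i, |E'| = i', |E ∩ E'| = s, where i, i' ≤ m. Then the probability that both H_E has rank i and H_{E'} has rank i' equals ψ_m(i)·ψ_m(i')/ψ_m(s). -/
/-!
Pass to the columns `g : ι → F^m` of `H` and let `N(A, B)` count the families independent on both
`A` and `B`. Adding to `B` an index `j ∉ A ∪ B` multiplies `N` by `1 - q^(|B| - m)`, because `g`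
stays independent on `insert j B` exactly when `g j` avoids the `q^|B|`-element span of `g '' B`.
Starting from `N(∅, ∅) = q^(m|ι|)` this gives `N(A, ∅) = q^(m|ι|) ψ(|A|)`; independence on `A`
forces independence on `A ∩ B`, so `N(A, A ∩ B) = N(A, ∅)`, and adding the indices of `B \ A`
gives `N(A, B) ψ(|A ∩ B|) = q^(m|ι|) ψ(|A|) ψ(|B|)`.
-/

open Finset

theorem psi_zero (q : ℝ) (m : ℕ) : psi q m 0 = 1 :=
  prod_range_zero _

theorem psi_succ (q : ℝ) (m j : ℕ) : psi q m (j + 1) = psi q m j * (1 - q ^ ((j : ℤ) - m)) :=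
  prod_range_succ _ _

theorem psi_ne_zero {q : ℝ} (hq : 1 < q) {m j : ℕ} (hj : j ≤ m) : psi q m j ≠ 0 := by
  refine prod_ne_zero_iff.2 fun k hk => sub_ne_zero.2 (zpow_lt_one_of_neg₀ hq ?_).ne'
  have := mem_range.1 hk
  omega

open Classical in
noncomputable def indepOnBoth (F V : Type*) [Field F] [AddCommGroup V] [Module F V] [Fintype V]
    {ι : Type*} [Fintype ι] (A B : Finset ι) : Finset (ι → V) :=
  {g | LinearIndepOn F g A ∧ LinearIndepOn F g B}

section

variable {F V : Type*} [Field F] [AddCommGroup V] [Module F V] [Fintype V]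

open Classical in
theorem card_notMem_span_of_linearIndepOn [Fintype F] {ι : Type*} {f : ι → V} {B : Finset ι}
    (hf : LinearIndepOn F f B) :
    (#{v | v ∉ Submodule.span F (f '' B)} : ℝ) = Fintype.card V - Fintype.card F ^ #B := by
  have hrank : Module.finrank F (Submodule.span F (f '' B)) = #B := by
    rw [Set.image_eq_range, finrank_span_eq_card hf]
    simp
  have hmem : #{v | v ∈ Submodule.span F (f '' B)} = Fintype.card F ^ #B := by
    rw [← hrank, ← Module.card_eq_pow_finrank, ← Fintype.card_coe]
    exact Fintype.card_congr (Equiv.subtypeEquivRight (by simp))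
  rw [eq_sub_iff_add_eq, ← Nat.cast_pow, ← hmem, add_comm]
  exact_mod_cast card_filter_add_card_filter_not _

variable {ι : Type*} [Fintype ι]

theorem mem_indepOnBoth {A B : Finset ι} {g : ι → V} :
    g ∈ indepOnBoth F V A B ↔ LinearIndepOn F g A ∧ LinearIndepOn F g B := by
  simp [indepOnBoth]

theorem card_indepOnBoth_empty_empty :
    #(indepOnBoth F V (∅ : Finset ι) ∅) = Fintype.card V ^ Fintype.card ι := by
  simp [indepOnBoth]

theorem indepOnBoth_of_subset {A B : Finset ι} (h : B ⊆ A) :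
    indepOnBoth F V A B = indepOnBoth F V ∅ A := by
  ext g
  simp only [mem_indepOnBoth, coe_empty, linearIndepOn_empty, true_and, and_iff_left_iff_imp]
  exact fun hA => hA.mono (by exact_mod_cast h)

theorem card_indepOnBoth_insert [Fintype F] [DecidableEq ι] {A B : Finset ι} {j : ι}
    (hjA : j ∉ A) (hjB : j ∉ B) :
    (#(indepOnBoth F V A (insert j B)) : ℝ) * Fintype.card V =
      #(indepOnBoth F V A B) * (Fintype.card V - Fintype.card F ^ #B) := by
  classical
  have mem_iff (g : ι → V) (w : V) :
      Function.update g j w ∈ indepOnBoth F V A B ∧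
          g j ∉ Submodule.span F (Function.update g j w '' B) ↔
        g ∈ indepOnBoth F V A (insert j B) := by
    have hA : Set.EqOn (Function.update g j w) g A := fun a ha =>
      Function.update_of_ne (ne_of_mem_of_not_mem ha hjA) _ _
    have hB : Set.EqOn (Function.update g j w) g B := fun b hb =>
      Function.update_of_ne (ne_of_mem_of_not_mem hb hjB) _ _
    rw [mem_indepOnBoth, mem_indepOnBoth, linearIndepOn_congr hA, linearIndepOn_congr hB,
      hB.image_eq, coe_insert, linearIndepOn_insert (by exact_mod_cast hjB), and_assoc]
  calc (#(indepOnBoth F V A (insert j B)) : ℝ) * Fintype.card V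
      = #(indepOnBoth F V A (insert j B) ×ˢ (univ : Finset V)) := by
        rw [card_product, card_univ]; push_cast; rfl
    _ = #((indepOnBoth F V A B).sigma fun g => {v | v ∉ Submodule.span F (g '' B)}) := by
        congr 1
        -- `(g, w) ↦ (update g j w, g j)` is an involution exchanging the two sets
        refine card_nbij' (fun p => ⟨Function.update p.1 j p.2, p.1 j⟩)
          (fun p => (Function.update p.1 j p.2, p.1 j)) ?_ ?_ ?_ ?_
        · rintro ⟨g, w⟩ hg
          simpa [mem_iff] using hg
        · rintro ⟨g, w⟩ hg
          simpa using (mem_iff (Function.update g j w) (g j)).1 (by simpa using hg)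
        · rintro ⟨g, w⟩ -
          simp
        · rintro ⟨g, w⟩ -
          simp
    _ = #(indepOnBoth F V A B) * (Fintype.card V - Fintype.card F ^ #B) := by
        rw [card_sigma, Nat.cast_sum,
          sum_congr rfl fun g hg => card_notMem_span_of_linearIndepOn (mem_indepOnBoth.1 hg).2,
          sum_const, nsmul_eq_mul]

theorem card_indepOnBoth_union_mul_psi [Fintype F] [DecidableEq ι] {A B R : Finset ι}
    (hAR : Disjoint A R) (hBR : Disjoint B R) :
    (#(indepOnBoth F V A (B ∪ R)) : ℝ) * psi (Fintype.card F) (Module.finrank F V) #B =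
      #(indepOnBoth F V A B) * psi (Fintype.card F) (Module.finrank F V) #(B ∪ R) := by
  set q : ℝ := (Fintype.card F : ℝ)
  set m := Module.finrank F V
  have hq : q ≠ 0 := by simp [q, Fintype.card_ne_zero]
  have step {C : Finset ι} {j : ι} (hjA : j ∉ A) (hjC : j ∉ C) :
      (#(indepOnBoth F V A (insert j C)) : ℝ) =
        #(indepOnBoth F V A C) * (1 - q ^ ((#C : ℤ) - m)) := by
    have hV : (Fintype.card V : ℝ) = q ^ m := by
      simp [q, m, Module.card_eq_pow_finrank (K := F) (V := V)]
    have := card_indepOnBoth_insert (F := F) (V := V) hjA hjC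
    rw [hV] at this
    rw [zpow_sub₀ hq, zpow_natCast, zpow_natCast, one_sub_div (pow_ne_zero _ hq),
      mul_div_assoc', eq_div_iff (pow_ne_zero _ hq), this]
  induction R using Finset.induction_on with
  | empty => simp
  | insert j R hjR ih =>
    rw [disjoint_insert_right] at hAR hBR
    have hjBR : j ∉ B ∪ R := by simp [hBR.1, hjR]
    rw [union_insert, step hAR.1 hjBR, card_insert_of_notMem hjBR, psi_succ, mul_right_comm,
      ih hAR.2 hBR.2, mul_assoc]

theorem card_indepOnBoth_mul_psi [Fintype F] [DecidableEq ι] (A B : Finset ι) :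
    (#(indepOnBoth F V A B) : ℝ) * psi (Fintype.card F) (Module.finrank F V) #(A ∩ B) =
      (Fintype.card V : ℝ) ^ Fintype.card ι * psi (Fintype.card F) (Module.finrank F V) #A *
        psi (Fintype.card F) (Module.finrank F V) #B := by
  have hA := card_indepOnBoth_union_mul_psi (F := F) (V := V) (A := ∅) (B := ∅) (R := A)
    (disjoint_empty_left _) (disjoint_empty_left _)
  have hB := card_indepOnBoth_union_mul_psi (F := F) (V := V) (A := A) (B := A ∩ B)
    (R := B \ A) disjoint_sdiff (disjoint_sdiff.mono_left inter_subset_left)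
  have hunion : A ∩ B ∪ B \ A = B := by rw [inter_comm]; exact sup_inf_sdiff B A
  rw [card_empty, psi_zero, mul_one, empty_union, card_indepOnBoth_empty_empty] at hA
  rw [hunion, indepOnBoth_of_subset inter_subset_left, hA] at hB
  push_cast at hB
  rw [hB]

end

theorem Matrix.rank_submatrix_coe_eq_card_iff {F r ι : Type*} [Field F] (H : Matrix r ι F)
    (E : Finset ι) : (H.submatrix id ((↑) : E → ι)).rank = #E ↔ LinearIndepOn F H.col E := by
  rw [Matrix.rank_eq_finrank_span_cols, LinearIndepOn, linearIndependent_iff_card_eq_finrank_span,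
    eq_comm]
  simp only [Finset.coe_sort_coe, Fintype.card_coe]
  rfl

theorem Matrix.natCard_rank_submatrix_eq_card_and {F r ι : Type*} [Field F] [Fintype F]
    [Fintype r] [DecidableEq r] [Fintype ι] [DecidableEq ι] (A B : Finset ι) :
    Nat.card {H : Matrix r ι F // (H.submatrix id ((↑) : A → ι)).rank = #A ∧
        (H.submatrix id ((↑) : B → ι)).rank = #B} =
      #(indepOnBoth F (r → F) A B) := by
  rw [Nat.card_eq_fintype_card, Fintype.card_subtype]
  refine card_nbij' Matrix.col (fun g => (Matrix.of g).transpose) ?_ ?_ (fun _ _ => rfl)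
    (fun _ _ => rfl)
  · intro H hH
    simpa [mem_indepOnBoth, Matrix.rank_submatrix_coe_eq_card_iff] using hH
  · intro g hg
    simpa [mem_indepOnBoth, Matrix.rank_submatrix_coe_eq_card_iff] using hg

theorem stmt_3_general (q m n i i' s : ℕ) (F : Type) [Field F] [Fintype F]
    (hq : Fintype.card F = q) (E E' : Finset (Fin n))
    (hE : E.card = i) (hE' : E'.card = i') (hs : (E ∩ E').card = s)
    (hi : i ≤ m) :
    (Nat.card {H : Matrix (Fin m) (Fin n) F //
        (H.submatrix id ((↑) : E → Fin n)).rank = i ∧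
        (H.submatrix id ((↑) : E' → Fin n)).rank = i'} : ℝ) / (q : ℝ) ^ (m * n)
      = psi q m i * psi q m i' / psi q m s := by
  subst hq hE hE' hs
  have hformula := card_indepOnBoth_mul_psi (F := F) (V := Fin m → F) E E'
  rw [Module.finrank_fin_fun, Fintype.card_fun, Fintype.card_fin, Fintype.card_fin] at hformula
  have hq : 1 < (Fintype.card F : ℝ) := by exact_mod_cast Fintype.one_lt_card
  rw [Matrix.natCard_rank_submatrix_eq_card_and,
    eq_div_iff (psi_ne_zero hq ((card_le_card inter_subset_left).trans hi)),
    div_mul_eq_mul_div, hformula]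
  push_cast
  rw [← pow_mul]
  field_simp

/-- For a uniformly random `m × n` matrix `H` over `F_q` and subsets `E, E'` of the columns
with `|E| = i ≤ m`, `|E'| = i' ≤ m`, `|E ∩ E'| = s`, the probability that `rk(H_E) = i` and
`rk(H_{E'}) = i'` equals `ψ_m(i) ψ_m(i') / ψ_m(s)`. -/
theorem stmt_3 (q m n i i' s : ℕ) (F : Type) [Field F] [Fintype F]
    (hq : Fintype.card F = q) (E E' : Finset (Fin n))
    (hE : E.card = i) (hE' : E'.card = i') (hs : (E ∩ E').card = s)
    (hi : i ≤ m) (hi' : i' ≤ m) :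
    (Nat.card {H : Matrix (Fin m) (Fin n) F //
        (H.submatrix id ((↑) : E → Fin n)).rank = i ∧
        (H.submatrix id ((↑) : E' → Fin n)).rank = i'} : ℝ) / (q : ℝ) ^ (m * n)
      = psi q m i * psi q m i' / psi q m s :=
  stmt_3_general q m n i i' s F hq E E' hE hE' hs hi
end

section
/- Given rk(H_{E∩E'}) = s (i.e., the columns of H indexed by E ∩ E' are linearly independent), the events {rk(H_E) = |E|} and {rk(H_{E'}) = |E'|} are conditionally independent for a uniformly random m × n matrix H over F_q. -/
set_option maxHeartbeats 1000000


/-- The probability of an event for a uniformly random `m × n` matrix over `F`. -/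
noncomputable def matProb (m n : ℕ) (F : Type) [Field F] [Fintype F]
    (p : Matrix (Fin m) (Fin n) F → Prop) : ℝ :=
  (Nat.card {H : Matrix (Fin m) (Fin n) F // p H} : ℝ)
    / (Fintype.card (Matrix (Fin m) (Fin n) F) : ℝ)

namespace Stmt12Aux

open Finset

attribute [local instance] Fintype.ofFinite

variable {m : ℕ} {F : Type} [Field F] [Fintype F]

local notation "𝕍" => (Fin m → F)
local notation "q" => Fintype.card F
local notation "C" => Fintype.card F ^ m

lemma card_V : Fintype.card (Fin m → F) = Fintype.card F ^ m := by
  simp [Fintype.card_fun]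

lemma card_compl_span {k : ℕ} {v : Fin k → 𝕍} (hv : LinearIndependent F v) :
    Nat.card ((Submodule.span F (Set.range v) : Set 𝕍)ᶜ : Set 𝕍) = C - q ^ k := by
  classical
  have h1 : Fintype.card ((Submodule.span F (Set.range v) : Set 𝕍)) = q ^ k := by
    rw [Module.card_eq_pow_finrank (K := F) (V := ((Submodule.span F (Set.range v)) : Set (Fin m → F)))]
    simp only [SetLike.coe_sort_coe, finrank_span_eq_card hv, Fintype.card_fin]
  rw [Nat.card_eq_fintype_card, Fintype.card_compl_set, h1, card_V]

lemma card_extension {s : ℕ} (w : Fin s → 𝕍) (hw : LinearIndependent F w) (r : ℕ) :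
    Nat.card {a : Fin r → 𝕍 // LinearIndependent F (Fin.append w a)} =
      ∏ i ∈ Finset.range r, (C - q ^ (s + i)) := by
  classical
  induction r with
  | zero =>
    have hall : ∀ a : Fin 0 → 𝕍, LinearIndependent F (Fin.append w a) := by
      intro a
      have h : Fin.append w a = w ∘ Fin.cast (Nat.add_zero s) := by
        rw [Subsingleton.elim a Fin.elim0, Fin.append_elim0]
      rw [h]
      exact hw.comp _ (fun x y hxy => by simpa [Fin.ext_iff] using hxy)
    rw [Nat.card_congr (Equiv.subtypeUnivEquiv hall)]
    simp
  | succ r ih =>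
    have key : ∀ a : Fin (r+1) → 𝕍, LinearIndependent F (Fin.append w a) ↔
        LinearIndependent F (Fin.append w (Fin.init a)) ∧
          a (Fin.last r) ∉ Submodule.span F (Set.range (Fin.append w (Fin.init a))) := by
      intro a
      have h1 : Fin.append w a =
          Fin.snoc (Fin.append w (Fin.init a)) (a (Fin.last r)) := by
        conv_lhs => rw [← Fin.snoc_init_self a]
        rw [Fin.append_snoc]
      rw [h1, linearIndependent_fin_snoc]
    have e : {a : Fin (r+1) → 𝕍 // LinearIndependent F (Fin.append w a)} ≃
        Σ b : {b : Fin r → 𝕍 // LinearIndependent F (Fin.append w b)},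
          ((Submodule.span F (Set.range (Fin.append w b.1)) : Set 𝕍)ᶜ : Set 𝕍) :=
      { toFun := fun a => ⟨⟨Fin.init a.1, ((key a.1).mp a.2).1⟩,
          ⟨a.1 (Fin.last r), ((key a.1).mp a.2).2⟩⟩
        invFun := fun b => ⟨Fin.snoc b.1.1 b.2.1, (key _).mpr (by
          rw [Fin.init_snoc, Fin.snoc_last]
          exact ⟨b.1.2, b.2.2⟩)⟩
        left_inv := fun a => Subtype.ext (Fin.snoc_init_self a.1)
        right_inv := fun b => by
          rcases b with ⟨⟨b, hb⟩, ⟨x, hx⟩⟩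
          have h1 : Fin.init (Fin.snoc b x : Fin (r+1) → 𝕍) = b := by simp
          refine Sigma.ext (Subtype.ext h1) ?_
          refine (Subtype.heq_iff_coe_eq ?_).mpr ?_
          · intro y; simp [h1]
          · simp }
    rw [Nat.card_congr e, Nat.card_eq_fintype_card, Fintype.card_sigma]
    have hfib : ∀ b : {b : Fin r → 𝕍 // LinearIndependent F (Fin.append w b)},
        Fintype.card ((Submodule.span F (Set.range (Fin.append w b.1)) : Set 𝕍)ᶜ : Set 𝕍) =
          C - q ^ (s + r) := fun b => by
      rw [← Nat.card_eq_fintype_card, card_compl_span b.2]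
    rw [Finset.sum_congr rfl (fun b _ => hfib b), Finset.sum_const, smul_eq_mul,
      Finset.card_univ, ← Nat.card_eq_fintype_card, ih, Finset.prod_range_succ]

lemma card_LI_index {α : Type} [Fintype α] :
    Nat.card {f : α → 𝕍 // LinearIndependent F f} =
      ∏ i ∈ Finset.range (Fintype.card α), (C - q ^ i) := by
  classical
  have h0 : LinearIndependent F (Fin.elim0 : Fin 0 → 𝕍) := linearIndependent_empty_type
  have hbr : ∀ (k : ℕ) (a : Fin k → 𝕍),
      LinearIndependent F (Fin.append (Fin.elim0 : Fin 0 → 𝕍) a) ↔ LinearIndependent F a := by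
    intro k a
    rw [Fin.append_left_nil _ _ rfl]
    exact linearIndependent_equiv (finCongr (Nat.zero_add k))
  set kk := Fintype.card α with hkk
  let eα := Fintype.equivFin α
  have e1 : {f : α → 𝕍 // LinearIndependent F f} ≃
      {a : Fin kk → 𝕍 // LinearIndependent F (Fin.append (Fin.elim0 : Fin 0 → 𝕍) a)} :=
    (Equiv.arrowCongr eα (Equiv.refl 𝕍)).subtypeEquiv (fun f =>
      ((linearIndependent_equiv eα.symm (f := f)).symm).trans (hbr kk (f ∘ ⇑eα.symm)).symm)
  rw [Nat.card_congr e1, card_extension _ h0 kk]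
  simp
lemma card_extension_sum {α β : Type} [Fintype α] [Fintype β] {w : α → 𝕍}
    (hw : LinearIndependent F w) :
    Nat.card {a : β → 𝕍 // LinearIndependent F (Sum.elim w a)} =
      ∏ i ∈ Finset.range (Fintype.card β), (C - q ^ (Fintype.card α + i)) := by
  classical
  let eα := Fintype.equivFin α
  let eβ := Fintype.equivFin β
  have hw' : LinearIndependent F (w ∘ ⇑eα.symm) := hw.comp _ eα.symm.injective
  have key : ∀ a : β → 𝕍, LinearIndependent F (Sum.elim w a) ↔
      LinearIndependent F (Fin.append (w ∘ ⇑eα.symm) (a ∘ ⇑eβ.symm)) := by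
    intro a
    have hfe : Fin.append (w ∘ ⇑eα.symm) (a ∘ ⇑eβ.symm) ∘
        ⇑((Equiv.sumCongr eα eβ).trans finSumFinEquiv) = Sum.elim w a := by
      funext x
      rcases x with x | x <;>
        simp [Function.comp, Equiv.sumCongr_apply, finSumFinEquiv_apply_left,
          finSumFinEquiv_apply_right, Fin.append_left, Fin.append_right]
    rw [← hfe]
    exact linearIndependent_equiv _
  have e1 : {a : β → 𝕍 // LinearIndependent F (Sum.elim w a)} ≃
      {a : Fin (Fintype.card β) → 𝕍 //
        LinearIndependent F (Fin.append (w ∘ ⇑eα.symm) a)} :=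
    (Equiv.arrowCongr eβ (Equiv.refl 𝕍)).subtypeEquiv (fun a => key a)
  rw [Nat.card_congr e1, card_extension _ hw']

def quadEquiv {n : ℕ} (A B : Finset (Fin n)) :
    ({x // x ∈ A ∩ B} ⊕ ({x // x ∈ A \ B} ⊕ ({x // x ∈ B \ A} ⊕ {x // x ∈ (A ∪ B)ᶜ}))) ≃
      Fin n where
  toFun := Sum.elim Subtype.val (Sum.elim Subtype.val (Sum.elim Subtype.val Subtype.val))
  invFun i :=
    if h1 : i ∈ A ∩ B then .inl ⟨i, h1⟩
    else if h2 : i ∈ A \ B then .inr (.inl ⟨i, h2⟩)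
    else if h3 : i ∈ B \ A then .inr (.inr (.inl ⟨i, h3⟩))
    else .inr (.inr (.inr ⟨i, by
      simp only [Finset.mem_inter, Finset.mem_sdiff] at h1 h2 h3
      simp only [Finset.mem_compl, Finset.mem_union]
      tauto⟩))
  left_inv := by
    rintro (x | x | x | x)
    · simp only [Sum.elim_inl, dif_pos x.2, Subtype.coe_eta]
    · rcases Finset.mem_sdiff.mp x.2 with ⟨hA, hB⟩
      have h1 : ¬ (x : Fin n) ∈ A ∩ B := by simp [Finset.mem_inter, hB]
      simp only [Sum.elim_inl, Sum.elim_inr, dif_neg h1, dif_pos x.2, Subtype.coe_eta]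
    · rcases Finset.mem_sdiff.mp x.2 with ⟨hB, hA⟩
      have h1 : ¬ (x : Fin n) ∈ A ∩ B := by simp [Finset.mem_inter, hA]
      have h2 : ¬ (x : Fin n) ∈ A \ B := by simp [Finset.mem_sdiff, hA]
      simp only [Sum.elim_inl, Sum.elim_inr, dif_neg h1, dif_neg h2, dif_pos x.2, Subtype.coe_eta]
    · have hx := Finset.mem_compl.mp x.2
      rw [Finset.mem_union] at hx
      push_neg at hx
      have h1 : ¬ (x : Fin n) ∈ A ∩ B := by simp [Finset.mem_inter, hx.1]
      have h2 : ¬ (x : Fin n) ∈ A \ B := by simp [Finset.mem_sdiff, hx.1]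
      have h3 : ¬ (x : Fin n) ∈ B \ A := by simp [Finset.mem_sdiff, hx.2]
      simp only [Sum.elim_inl, Sum.elim_inr, dif_neg h1, dif_neg h2, dif_neg h3, Subtype.coe_eta]
  right_inv := fun i => by
    by_cases h1 : i ∈ A ∩ B
    · simp only [dif_pos h1, Sum.elim_inl]
    · by_cases h2 : i ∈ A \ B
      · simp only [dif_neg h1, dif_pos h2, Sum.elim_inr, Sum.elim_inl]
      · by_cases h3 : i ∈ B \ A
        · simp only [dif_neg h1, dif_neg h2, dif_pos h3, Sum.elim_inr, Sum.elim_inl]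
        · simp only [dif_neg h1, dif_neg h2, dif_neg h3, Sum.elim_inr]

def jL {n : ℕ} (A B : Finset (Fin n)) :
    ({x // x ∈ A ∩ B} ⊕ {x // x ∈ A \ B}) ≃ {x // x ∈ A} where
  toFun := Sum.elim (fun x => ⟨x.1, (Finset.mem_inter.mp x.2).1⟩)
    (fun x => ⟨x.1, (Finset.mem_sdiff.mp x.2).1⟩)
  invFun x := if h : x.1 ∈ B then .inl ⟨x.1, Finset.mem_inter.mpr ⟨x.2, h⟩⟩
    else .inr ⟨x.1, Finset.mem_sdiff.mpr ⟨x.2, h⟩⟩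
  left_inv := by
    rintro (x | x)
    · simp only [Sum.elim_inl, dif_pos (Finset.mem_inter.mp x.2).2, Subtype.coe_eta]
    · simp only [Sum.elim_inr, dif_neg (Finset.mem_sdiff.mp x.2).2, Subtype.coe_eta]
  right_inv := fun x => by
    by_cases h : x.1 ∈ B
    · simp only [dif_pos h, Sum.elim_inl, Subtype.coe_eta]
    · simp only [dif_neg h, Sum.elim_inr, Subtype.coe_eta]

def jR {n : ℕ} (A B : Finset (Fin n)) :
    ({x // x ∈ A ∩ B} ⊕ {x // x ∈ B \ A}) ≃ {x // x ∈ B} where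
  toFun := Sum.elim (fun x => ⟨x.1, (Finset.mem_inter.mp x.2).2⟩)
    (fun x => ⟨x.1, (Finset.mem_sdiff.mp x.2).1⟩)
  invFun x := if h : x.1 ∈ A then .inl ⟨x.1, Finset.mem_inter.mpr ⟨h, x.2⟩⟩
    else .inr ⟨x.1, Finset.mem_sdiff.mpr ⟨x.2, h⟩⟩
  left_inv := by
    rintro (x | x)
    · simp only [Sum.elim_inl, dif_pos (Finset.mem_inter.mp x.2).1, Subtype.coe_eta]
    · simp only [Sum.elim_inr, dif_neg (Finset.mem_sdiff.mp x.2).2, Subtype.coe_eta]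
  right_inv := fun x => by
    by_cases h : x.1 ∈ A
    · simp only [dif_pos h, Sum.elim_inl, Subtype.coe_eta]
    · simp only [dif_neg h, Sum.elim_inr, Subtype.coe_eta]

def subtypeFstEquiv {X Y : Type} (P : X → Prop) : {z : X × Y // P z.1} ≃ {x // P x} × Y where
  toFun z := (⟨z.1.1, z.2⟩, z.1.2)
  invFun z := ⟨(z.1.1, z.2), z.1.2⟩
  left_inv z := rfl
  right_inv z := rfl
lemma count_pair {n : ℕ} (A B : Finset (Fin n)) :
    Nat.card {g : Fin n → 𝕍 // LinearIndependent F (fun i : {x // x ∈ A} => g i.1) ∧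
        LinearIndependent F (fun i : {x // x ∈ B} => g i.1)} =
      (∏ i ∈ Finset.range (A ∩ B).card, (C - q ^ i)) *
        ((∏ i ∈ Finset.range (A \ B).card, (C - q ^ ((A ∩ B).card + i))) *
          ((∏ i ∈ Finset.range (B \ A).card, (C - q ^ ((A ∩ B).card + i))) *
            C ^ (A ∪ B)ᶜ.card)) := by
  classical
  have hc1 : Fintype.card {x // x ∈ A ∩ B} = (A ∩ B).card :=
    (Fintype.card_congr (Equiv.refl _)).trans (Fintype.card_coe _)
  have hc2 : Fintype.card {x // x ∈ A \ B} = (A \ B).card :=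
    (Fintype.card_congr (Equiv.refl _)).trans (Fintype.card_coe _)
  have hc3 : Fintype.card {x // x ∈ B \ A} = (B \ A).card :=
    (Fintype.card_congr (Equiv.refl _)).trans (Fintype.card_coe _)
  have hc4 : Fintype.card {x // x ∈ (A ∪ B)ᶜ} = (A ∪ B)ᶜ.card :=
    (Fintype.card_congr (Equiv.refl _)).trans (Fintype.card_coe _)
  let e4 := quadEquiv A B
  let ePi : (Fin n → 𝕍) ≃ (({x // x ∈ A ∩ B} → 𝕍) × (({x // x ∈ A \ B} → 𝕍) ×
      (({x // x ∈ B \ A} → 𝕍) × ({x // x ∈ (A ∪ B)ᶜ} → 𝕍)))) :=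
    ((Equiv.arrowCongr e4 (Equiv.refl 𝕍)).symm).trans
      ((Equiv.sumArrowEquivProdArrow _ _ 𝕍).trans
        (Equiv.prodCongr (Equiv.refl _)
          ((Equiv.sumArrowEquivProdArrow _ _ 𝕍).trans
            (Equiv.prodCongr (Equiv.refl _) (Equiv.sumArrowEquivProdArrow _ _ 𝕍)))))
  have hA : ∀ g : Fin n → 𝕍, LinearIndependent F (fun i : {x // x ∈ A} => g i.1) ↔
      LinearIndependent F (Sum.elim (fun x : {x // x ∈ A ∩ B} => g x.1)
        (fun x : {x // x ∈ A \ B} => g x.1)) := by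
    intro g
    have heq : (fun i : {x // x ∈ A} => g i.1) ∘ ⇑(jL A B) =
        Sum.elim (fun x : {x // x ∈ A ∩ B} => g x.1) (fun x : {x // x ∈ A \ B} => g x.1) :=
      funext (by rintro (x | x) <;> rfl)
    rw [← heq]
    exact (linearIndependent_equiv (jL A B)).symm
  have hB : ∀ g : Fin n → 𝕍, LinearIndependent F (fun i : {x // x ∈ B} => g i.1) ↔
      LinearIndependent F (Sum.elim (fun x : {x // x ∈ A ∩ B} => g x.1)
        (fun x : {x // x ∈ B \ A} => g x.1)) := by
    intro g
    have heq : (fun i : {x // x ∈ B} => g i.1) ∘ ⇑(jR A B) =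
        Sum.elim (fun x : {x // x ∈ A ∩ B} => g x.1) (fun x : {x // x ∈ B \ A} => g x.1) :=
      funext (by rintro (x | x) <;> rfl)
    rw [← heq]
    exact (linearIndependent_equiv (jR A B)).symm
  have estep : {g : Fin n → 𝕍 // LinearIndependent F (fun i : {x // x ∈ A} => g i.1) ∧
        LinearIndependent F (fun i : {x // x ∈ B} => g i.1)} ≃
      {t : ({x // x ∈ A ∩ B} → 𝕍) × (({x // x ∈ A \ B} → 𝕍) ×
          (({x // x ∈ B \ A} → 𝕍) × ({x // x ∈ (A ∪ B)ᶜ} → 𝕍))) //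
        LinearIndependent F (Sum.elim t.1 t.2.1) ∧
          LinearIndependent F (Sum.elim t.1 t.2.2.1)} :=
    ePi.subtypeEquiv (fun g => and_congr (hA g) (hB g))
  rw [Nat.card_congr estep,
    Nat.card_congr (Equiv.subtypeProdEquivSigmaSubtype
      (fun (w : {x // x ∈ A ∩ B} → 𝕍) (y : ({x // x ∈ A \ B} → 𝕍) ×
          (({x // x ∈ B \ A} → 𝕍) × ({x // x ∈ (A ∪ B)ᶜ} → 𝕍))) =>
        LinearIndependent F (Sum.elim w y.1) ∧ LinearIndependent F (Sum.elim w y.2.1)))]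
  have efib : ∀ w : {x // x ∈ A ∩ B} → 𝕍,
      {y : ({x // x ∈ A \ B} → 𝕍) ×
          (({x // x ∈ B \ A} → 𝕍) × ({x // x ∈ (A ∪ B)ᶜ} → 𝕍)) //
        LinearIndependent F (Sum.elim w y.1) ∧ LinearIndependent F (Sum.elim w y.2.1)} ≃
      ({a : {x // x ∈ A \ B} → 𝕍 // LinearIndependent F (Sum.elim w a)} ×
        ({b : {x // x ∈ B \ A} → 𝕍 // LinearIndependent F (Sum.elim w b)} ×
          ({x // x ∈ (A ∪ B)ᶜ} → 𝕍))) := fun w =>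
    (@Equiv.subtypeProdEquivProd ({x // x ∈ A \ B} → 𝕍)
        ((({x // x ∈ B \ A} → 𝕍) × ({x // x ∈ (A ∪ B)ᶜ} → 𝕍)))
        (fun a => LinearIndependent F (Sum.elim w a))
        (fun z => LinearIndependent F (Sum.elim w z.1))).trans
      (Equiv.prodCongr (Equiv.refl {a : {x // x ∈ A \ B} → 𝕍 // LinearIndependent F (Sum.elim w a)})
        (subtypeFstEquiv (X := {x // x ∈ B \ A} → 𝕍) (Y := {x // x ∈ (A ∪ B)ᶜ} → 𝕍)
          (fun b => LinearIndependent F (Sum.elim w b))))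
  rw [Nat.card_eq_fintype_card, Fintype.card_sigma]
  have hval : ∀ w : {x // x ∈ A ∩ B} → 𝕍,
      Fintype.card {y : ({x // x ∈ A \ B} → 𝕍) ×
          (({x // x ∈ B \ A} → 𝕍) × ({x // x ∈ (A ∪ B)ᶜ} → 𝕍)) //
        LinearIndependent F (Sum.elim w y.1) ∧ LinearIndependent F (Sum.elim w y.2.1)} =
      if LinearIndependent F w then
        (∏ i ∈ Finset.range (A \ B).card, (C - q ^ ((A ∩ B).card + i))) *
          ((∏ i ∈ Finset.range (B \ A).card, (C - q ^ ((A ∩ B).card + i))) *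
            C ^ (A ∪ B)ᶜ.card)
      else 0 := by
    intro w
    rw [Fintype.card_congr (efib w)]
    by_cases hw : LinearIndependent F w
    · rw [if_pos hw]
      have ea : Fintype.card {a : {x // x ∈ A \ B} → 𝕍 //
          LinearIndependent F (Sum.elim w a)} =
          ∏ i ∈ Finset.range (A \ B).card, (C - q ^ ((A ∩ B).card + i)) := by
        rw [← Nat.card_eq_fintype_card, card_extension_sum hw, hc2, hc1]
      have eb : Fintype.card {b : {x // x ∈ B \ A} → 𝕍 //
          LinearIndependent F (Sum.elim w b)} =
          ∏ i ∈ Finset.range (B \ A).card, (C - q ^ ((A ∩ B).card + i)) := by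
        rw [← Nat.card_eq_fintype_card, card_extension_sum hw, hc3, hc1]
      have ec : Fintype.card ({x // x ∈ (A ∪ B)ᶜ} → 𝕍) = C ^ (A ∪ B)ᶜ.card := by
        rw [Fintype.card_fun, card_V, hc4]
      rw [Fintype.card_prod, Fintype.card_prod, ea, eb, ec]
    · rw [if_neg hw]
      haveI : IsEmpty {a : {x // x ∈ A \ B} → 𝕍 // LinearIndependent F (Sum.elim w a)} :=
        ⟨fun a => hw (a.2.comp Sum.inl Sum.inl_injective)⟩
      rw [Fintype.card_prod, Fintype.card_eq_zero, zero_mul]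
  rw [Finset.sum_congr rfl (fun w _ => hval w), Finset.sum_ite, Finset.sum_const,
    Finset.sum_const_zero, add_zero, smul_eq_mul, ← Fintype.card_subtype,
    ← Nat.card_eq_fintype_card, card_LI_index, hc1]
def tEquiv {n : ℕ} : Matrix (Fin m) (Fin n) F ≃ (Fin n → 𝕍) where
  toFun M := fun j i => M i j
  invFun g := fun i j => g j i
  left_inv M := rfl
  right_inv g := rfl

lemma rank_cond_iff {n : ℕ} (A : Finset (Fin n)) (H : Matrix (Fin m) (Fin n) F) :
    (H.submatrix id ((↑) : A → Fin n)).rank = A.card ↔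
      LinearIndependent F (fun j : {x // x ∈ A} => fun i => H i j.1) := by
  rw [Matrix.rank_eq_finrank_span_cols, linearIndependent_iff_card_eq_finrank_span]
  have hc : Fintype.card {x // x ∈ A} = A.card :=
    (Fintype.card_congr (Equiv.refl _)).trans (Fintype.card_coe _)
  constructor
  · intro h
    rw [hc]
    exact h.symm
  · intro h
    rw [hc] at h
    exact h.symm

lemma card_event {n : ℕ} (A B : Finset (Fin n)) :
    Nat.card {H : Matrix (Fin m) (Fin n) F //
        (H.submatrix id ((↑) : A → Fin n)).rank = A.card ∧
        (H.submatrix id ((↑) : B → Fin n)).rank = B.card} =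
      (∏ i ∈ Finset.range (A ∩ B).card, (C - q ^ i)) *
        ((∏ i ∈ Finset.range (A \ B).card, (C - q ^ ((A ∩ B).card + i))) *
          ((∏ i ∈ Finset.range (B \ A).card, (C - q ^ ((A ∩ B).card + i))) *
            C ^ (A ∪ B)ᶜ.card)) := by
  have est : {H : Matrix (Fin m) (Fin n) F //
      (H.submatrix id ((↑) : A → Fin n)).rank = A.card ∧
      (H.submatrix id ((↑) : B → Fin n)).rank = B.card} ≃
      {g : Fin n → 𝕍 // LinearIndependent F (fun i : {x // x ∈ A} => g i.1) ∧
        LinearIndependent F (fun i : {x // x ∈ B} => g i.1)} :=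
    tEquiv.subtypeEquiv (fun H => and_congr (rank_cond_iff A H) (rank_cond_iff B H))
  rw [Nat.card_congr est]
  exact count_pair A B

lemma card_event_single {n : ℕ} (A : Finset (Fin n)) :
    Nat.card {H : Matrix (Fin m) (Fin n) F //
        (H.submatrix id ((↑) : A → Fin n)).rank = A.card} =
      (∏ i ∈ Finset.range A.card, (C - q ^ i)) * C ^ Aᶜ.card := by
  have h1 : Nat.card {H : Matrix (Fin m) (Fin n) F //
        (H.submatrix id ((↑) : A → Fin n)).rank = A.card} =
      Nat.card {H : Matrix (Fin m) (Fin n) F //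
        (H.submatrix id ((↑) : A → Fin n)).rank = A.card ∧
        (H.submatrix id ((↑) : A → Fin n)).rank = A.card} :=
    Nat.card_congr (Equiv.subtypeEquivRight (fun H => and_self_iff.symm))
  rw [h1, card_event A A, Finset.inter_self, Finset.sdiff_self, Finset.union_self]
  simp

end Stmt12Aux

open Stmt12Aux Finset

/-- Conditional independence: given that the columns of `H` indexed by `E ∩ E'` are
linearly independent (i.e. `rk(H_{E∩E'}) = |E ∩ E'|`), the events `rk(H_E) = |E|` and
`rk(H_{E'}) = |E'|` are conditionally independent for a uniformly random `m × n`
matrix `H` over `F_q`. -/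
theorem stmt_12 (q m n : ℕ) (F : Type) [Field F] [Fintype F]
    (hq : Fintype.card F = q) (E E' : Finset (Fin n)) (hs : (E ∩ E').card ≤ m) :
    matProb m n F (fun H =>
        ((H.submatrix id ((↑) : E → Fin n)).rank = E.card ∧
          (H.submatrix id ((↑) : E' → Fin n)).rank = E'.card) ∧
        (H.submatrix id ((↑) : (E ∩ E' : Finset (Fin n)) → Fin n)).rank = (E ∩ E').card)
        / matProb m n F (fun H =>
          (H.submatrix id ((↑) : (E ∩ E' : Finset (Fin n)) → Fin n)).rank = (E ∩ E').card)
      = (matProb m n F (fun H =>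
            (H.submatrix id ((↑) : E → Fin n)).rank = E.card ∧
            (H.submatrix id ((↑) : (E ∩ E' : Finset (Fin n)) → Fin n)).rank
              = (E ∩ E').card)
          / matProb m n F (fun H =>
            (H.submatrix id ((↑) : (E ∩ E' : Finset (Fin n)) → Fin n)).rank
              = (E ∩ E').card))
        * (matProb m n F (fun H =>
            (H.submatrix id ((↑) : E' → Fin n)).rank = E'.card ∧
            (H.submatrix id ((↑) : (E ∩ E' : Finset (Fin n)) → Fin n)).rank
              = (E ∩ E').card)
          / matProb m n F (fun H =>
            (H.submatrix id ((↑) : (E ∩ E' : Finset (Fin n)) → Fin n)).rank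
              = (E ∩ E').card)) := by
  classical
  have himp : ∀ H : Matrix (Fin m) (Fin n) F,
      (H.submatrix id ((↑) : E → Fin n)).rank = E.card →
      (H.submatrix id ((↑) : (E ∩ E' : Finset (Fin n)) → Fin n)).rank = (E ∩ E').card := by
    intro H h
    rw [rank_cond_iff] at h ⊢
    exact h.comp
      (fun x : {x // x ∈ E ∩ E'} => (⟨x.1, (Finset.mem_inter.mp x.2).1⟩ : {x // x ∈ E}))
      (fun u v huv => Subtype.ext (congrArg (fun t : {x // x ∈ E} => t.1) huv))
  have e1 : Nat.card {H : Matrix (Fin m) (Fin n) F //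
      ((H.submatrix id ((↑) : E → Fin n)).rank = E.card ∧
        (H.submatrix id ((↑) : E' → Fin n)).rank = E'.card) ∧
      (H.submatrix id ((↑) : (E ∩ E' : Finset (Fin n)) → Fin n)).rank = (E ∩ E').card} =
      Nat.card {H : Matrix (Fin m) (Fin n) F //
        (H.submatrix id ((↑) : E → Fin n)).rank = E.card ∧
        (H.submatrix id ((↑) : E' → Fin n)).rank = E'.card} :=
    Nat.card_congr (Equiv.subtypeEquivRight (fun H =>
      ⟨fun h => h.1, fun h => ⟨h, himp H h.1⟩⟩))
  have hq1 : E ∩ (E ∩ E') = E ∩ E' := by rw [← Finset.inter_assoc, Finset.inter_self]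
  have hq2 : E \ (E ∩ E') = E \ E' := Finset.sdiff_inter_self_left E E'
  have hq3 : (E ∩ E') \ E = ∅ :=
    Finset.sdiff_eq_empty_iff_subset.mpr Finset.inter_subset_left
  have hq4 : E ∪ (E ∩ E') = E := Finset.union_eq_left.mpr Finset.inter_subset_left
  have hr1 : E' ∩ (E ∩ E') = E ∩ E' := by
    ext x; simp only [Finset.mem_inter]; tauto
  have hr2 : E' \ (E ∩ E') = E' \ E := Finset.sdiff_inter_self_right E' E
  have hr3 : (E ∩ E') \ E' = ∅ :=
    Finset.sdiff_eq_empty_iff_subset.mpr Finset.inter_subset_right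
  have hr4 : E' ∪ (E ∩ E') = E' := Finset.union_eq_left.mpr Finset.inter_subset_right
  simp only [matProb]
  rw [e1, card_event E E', card_event_single (E ∩ E'), card_event E (E ∩ E'),
    card_event E' (E ∩ E'), hq1, hq2, hq3, hq4, hr1, hr2, hr3, hr4]
  simp only [Finset.card_empty, Finset.range_zero, Finset.prod_empty, one_mul, mul_one]
  -- name the pieces
  set Cq := Fintype.card F ^ m with hCq
  set NS := ∏ i ∈ Finset.range (E ∩ E').card, (Cq - Fintype.card F ^ i) with hNS
  set XD := ∏ i ∈ Finset.range (E \ E').card,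
    (Cq - Fintype.card F ^ ((E ∩ E').card + i)) with hXD
  set XD' := ∏ i ∈ Finset.range (E' \ E).card,
    (Cq - Fintype.card F ^ ((E ∩ E').card + i)) with hXD'
  have hexp : (E ∪ E')ᶜ.card + (E ∩ E')ᶜ.card = Eᶜ.card + E'ᶜ.card := by
    have h5 := Finset.card_union_add_card_inter E E'
    have h6 := Finset.card_le_univ E
    have h7 := Finset.card_le_univ E'
    have h8 := Finset.card_le_univ (E ∪ E')
    have h9 := Finset.card_le_univ (E ∩ E')
    simp only [Finset.card_compl, Fintype.card_fin] at *
    omega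
  have key : (NS * (XD * (XD' * Cq ^ (E ∪ E')ᶜ.card))) * (NS * Cq ^ (E ∩ E')ᶜ.card) =
      (NS * (XD * Cq ^ Eᶜ.card)) * (NS * (XD' * Cq ^ E'ᶜ.card)) := by
    calc (NS * (XD * (XD' * Cq ^ (E ∪ E')ᶜ.card))) * (NS * Cq ^ (E ∩ E')ᶜ.card)
        = (NS * NS) * (XD * XD') * (Cq ^ ((E ∪ E')ᶜ.card + (E ∩ E')ᶜ.card)) := by
          rw [pow_add]; ring
      _ = (NS * NS) * (XD * XD') * (Cq ^ (Eᶜ.card + E'ᶜ.card)) := by rw [hexp]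
      _ = (NS * (XD * Cq ^ Eᶜ.card)) * (NS * (XD' * Cq ^ E'ᶜ.card)) := by
          rw [pow_add]; ring
  have hNSpos : 0 < NS := by
    rw [hNS]
    refine Finset.prod_pos fun i hi => ?_
    have h1 : Fintype.card F ^ i < Cq := by
      rw [hCq]
      exact Nat.pow_lt_pow_right Fintype.one_lt_card
        (lt_of_lt_of_le (Finset.mem_range.mp hi) hs)
    omega
  have hvC : 0 < NS * Cq ^ (E ∩ E')ᶜ.card :=
    Nat.mul_pos hNSpos (Nat.pow_pos (by rw [hCq]; exact Nat.pow_pos Fintype.card_pos))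
  set T := (Fintype.card (Matrix (Fin m) (Fin n) F) : ℝ) with hT
  have hT0 : T ≠ 0 := by
    rw [hT]
    exact_mod_cast Fintype.card_ne_zero
  have hdiv : ∀ u v : ℝ, (u / T) / (v / T) = u / v := by
    intro u v
    rw [div_div_div_comm, div_self hT0, div_one]
  rw [hdiv, hdiv, hdiv]
  have hvC' : ((NS * Cq ^ (E ∩ E')ᶜ.card : ℕ) : ℝ) ≠ 0 := by
    exact_mod_cast hvC.ne'
  rw [div_mul_div_comm, div_eq_div_iff hvC' (mul_ne_zero hvC' hvC')]
  have key2 : (NS * (XD * (XD' * Cq ^ (E ∪ E')ᶜ.card))) * ((NS * Cq ^ (E ∩ E')ᶜ.card) * (NS * Cq ^ (E ∩ E')ᶜ.card)) =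
      (NS * (XD * Cq ^ Eᶜ.card)) * (NS * (XD' * Cq ^ E'ᶜ.card)) * (NS * Cq ^ (E ∩ E')ᶜ.card) := by
    rw [show (NS * (XD * (XD' * Cq ^ (E ∪ E')ᶜ.card))) * ((NS * Cq ^ (E ∩ E')ᶜ.card) * (NS * Cq ^ (E ∩ E')ᶜ.card)) =
      ((NS * (XD * (XD' * Cq ^ (E ∪ E')ᶜ.card))) * (NS * Cq ^ (E ∩ E')ᶜ.card)) * (NS * Cq ^ (E ∩ E')ᶜ.card) from by ring, key]
  exact_mod_cast key2
end

section
/- For fixed 0 < R < 1 and 0 < ε < 1, the function f(t) = −(ℓ+1)·max(0, 1−R−t) + h(t) + t·log_q ε + (1−t)·log_q(1−ε) on (0,1), where h(t) = −t log_q t − (1−t) log_q(1−t), attains its supremum: at t = q^{ℓ+1}ε/(1+(q^{ℓ+1}−1)ε) when 0 < R ≤ (1−ε)/(1+(q^{ℓ+1}−1)ε); at t = 1−R when (1−ε)/(1+(q^{ℓ+1}−1)ε) < R < 1−ε; and at t = ε with f(ε) = 0 when 1−ε ≤ R < 1. -/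
/-
Write `f(t) = -(ℓ+1)·max(0, 1-R-t) - D(t‖ε)`, where `D` is the binary Kullback–Leibler divergence
in base `q`. Tilting `ε` to `ε' = q^{ℓ+1}ε / (1 + (q^{ℓ+1}-1)ε)` absorbs a linear term:
`f(t) = -(ℓ+1)·max(t, 1-R) - D(t‖ε') + log_q(1 + (q^{ℓ+1}-1)ε)`.
Since `D(·‖s) ≥ 0` vanishes at `s` and grows as its argument moves away from `s`, the maximiser is
`ε'` if `ε' ≤ 1-R` (second form), `ε` if `1-R ≤ ε` (first form), and otherwise `1-R`, using the
second form to the left of `1-R` and the first form to its right.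
-/

open Real Set

/-- The binary entropy function in `q`-its: `h(t) = -t log_q t - (1-t) log_q(1-t)`. -/
noncomputable def entq (q t : ℝ) : ℝ := -t * Real.logb q t - (1 - t) * Real.logb q (1 - t)

/-- The objective function
`f(t) = -(ℓ+1) max(0, 1-R-t) + h(t) + t log_q ε + (1-t) log_q(1-ε)`. -/
noncomputable def fobj (q R ε : ℝ) (l : ℕ) (t : ℝ) : ℝ :=
  -((l : ℝ) + 1) * max 0 (1 - R - t) + entq q t
    + t * Real.logb q ε + (1 - t) * Real.logb q (1 - ε)

noncomputable def klDivq (q t s : ℝ) : ℝ :=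
  -entq q t - t * logb q s - (1 - t) * logb q (1 - s)

noncomputable def logitq (q x : ℝ) : ℝ := logb q x - logb q (1 - x)

noncomputable def tilt (a s : ℝ) : ℝ := a * s / (1 + (a - 1) * s)

section KLDivergence

open InformationTheory

variable {q t r s : ℝ}

lemma klDivq_self (q s : ℝ) : klDivq q s s = 0 := by
  unfold klDivq entq; ring

lemma klDivq_eq_klFun (ht : t ∈ Ioo 0 1) (hs : s ∈ Ioo 0 1) :
    klDivq q t s = (s * klFun (t / s) + (1 - s) * klFun ((1 - t) / (1 - s))) / log q := by
  obtain ⟨ht0, ht1⟩ := ht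
  obtain ⟨hs0, hs1⟩ := hs
  have ht1' : 1 - t ≠ 0 := by linarith
  have hs1' : 1 - s ≠ 0 := by linarith
  unfold klDivq entq logb klFun
  rw [log_div ht0.ne' hs0.ne', log_div ht1' hs1']
  field_simp
  ring

lemma klDivq_nonneg (hq : 1 < q) (ht : t ∈ Ioo 0 1) (hs : s ∈ Ioo 0 1) : 0 ≤ klDivq q t s := by
  have hs0 : 0 < s := hs.1
  have hs1 : 0 < 1 - s := sub_pos.2 hs.2
  rw [klDivq_eq_klFun ht hs]
  have := klFun_nonneg (div_pos ht.1 hs0).le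
  have := klFun_nonneg (div_pos (sub_pos.2 ht.2) hs1).le
  have := log_pos hq
  positivity

lemma klDivq_eq_add (q t r s : ℝ) :
    klDivq q t s = klDivq q t r + klDivq q r s + (t - r) * (logitq q r - logitq q s) := by
  unfold klDivq entq logitq; ring

lemma logitq_le_logitq (hq : 1 < q) (hr0 : 0 < r) (hrs : r ≤ s) (hs1 : s < 1) :
    logitq q r ≤ logitq q s := by
  have hr1 : 0 < 1 - r := by linarith
  have hs1' : 0 < 1 - s := by linarith
  unfold logitq
  rw [← logb_div hr0.ne' hr1.ne', ← logb_div (hr0.trans_le hrs).ne' hs1'.ne']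
  exact logb_le_logb_of_le hq (div_pos hr0 hr1) (div_le_div₀ (by linarith) hrs hs1' (by linarith))

lemma klDivq_le_klDivq_of_mem_uIcc (hq : 1 < q) (ht : t ∈ Ioo 0 1) (hs : s ∈ Ioo 0 1)
    (hr : r ∈ uIcc s t) : klDivq q r s ≤ klDivq q t s := by
  have hr01 : r ∈ Ioo 0 1 := ordConnected_Ioo.uIcc_subset hs ht hr
  have hcross : 0 ≤ (t - r) * (logitq q r - logitq q s) := by
    rcases mem_uIcc.1 hr with ⟨hsr, hrt⟩ | ⟨htr, hrs⟩
    · exact mul_nonneg (by linarith) (sub_nonneg.2 (logitq_le_logitq hq hs.1 hsr hr01.2))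
    · exact mul_nonneg_of_nonpos_of_nonpos (by linarith)
        (sub_nonpos.2 (logitq_le_logitq hq hr01.1 hrs hs.2))
  linarith [klDivq_eq_add q t r s, klDivq_nonneg hq ht hr01]

end KLDivergence

section Tilt

variable {a s : ℝ}

lemma one_add_mul_pos (ha : 0 < a) (hs : s ∈ Ioo 0 1) : 0 < 1 + (a - 1) * s := by
  nlinarith [hs.1, hs.2]

lemma one_sub_tilt (ha : 0 < a) (hs : s ∈ Ioo 0 1) :
    1 - tilt a s = (1 - s) / (1 + (a - 1) * s) := by
  have hZ := (one_add_mul_pos ha hs).ne'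
  rw [tilt, eq_div_iff hZ, sub_mul, div_mul_cancel₀ _ hZ]
  ring

lemma tilt_mem_Ioo (ha : 0 < a) (hs : s ∈ Ioo 0 1) : tilt a s ∈ Ioo 0 1 := by
  have hZ := one_add_mul_pos ha hs
  refine ⟨div_pos (mul_pos ha hs.1) hZ, ?_⟩
  have : 0 < 1 - tilt a s := by
    rw [one_sub_tilt ha hs]; exact div_pos (sub_pos.2 hs.2) hZ
  linarith

lemma klDivq_eq_klDivq_tilt (q t : ℝ) (ha : 0 < a) (hs : s ∈ Ioo 0 1) :
    klDivq q t s = klDivq q t (tilt a s) + t * logb q a - logb q (1 + (a - 1) * s) := by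
  have hZ := (one_add_mul_pos ha hs).ne'
  have hlog : logb q (tilt a s) = logb q a + logb q s - logb q (1 + (a - 1) * s) := by
    rw [tilt, logb_div (mul_pos ha hs.1).ne' hZ, logb_mul ha.ne' hs.1.ne']
  have hlog' : logb q (1 - tilt a s) = logb q (1 - s) - logb q (1 + (a - 1) * s) := by
    rw [one_sub_tilt ha hs, logb_div (sub_pos.2 hs.2).ne' hZ]
  unfold klDivq
  rw [hlog, hlog']
  ring

end Tilt

section Objective

variable {q R ε : ℝ} {l : ℕ}

lemma fobj_eq_neg_klDivq (q R ε : ℝ) (l : ℕ) (t : ℝ) :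
    fobj q R ε l t = -((l : ℝ) + 1) * max 0 (1 - R - t) - klDivq q t ε := by
  unfold fobj klDivq; ring

lemma fobj_eq_neg_klDivq_tilt (hq : 1 < q) (hε : ε ∈ Ioo 0 1) (t : ℝ) :
    fobj q R ε l t = -((l : ℝ) + 1) * max t (1 - R) - klDivq q t (tilt (q ^ (l + 1)) ε)
      + logb q (1 + (q ^ (l + 1) - 1) * ε) := by
  have hmax : max t (1 - R) = max 0 (1 - R - t) + t := by
    rw [← max_add_add_right]; simp
  rw [fobj_eq_neg_klDivq, klDivq_eq_klDivq_tilt q t (pow_pos (zero_lt_one.trans hq) (l + 1)) hε,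
    logb_pow, logb_self_eq_one hq, hmax]
  push_cast
  ring

lemma isMaxOn_fobj_tilt (hq : 1 < q) (hε : ε ∈ Ioo 0 1) (hR : tilt (q ^ (l + 1)) ε ≤ 1 - R) :
    IsMaxOn (fobj q R ε l) (Ioo 0 1) (tilt (q ^ (l + 1)) ε) := by
  refine isMaxOn_iff.2 fun t ht => ?_
  rw [fobj_eq_neg_klDivq_tilt hq hε, fobj_eq_neg_klDivq_tilt hq hε, max_eq_right hR, klDivq_self]
  have := klDivq_nonneg hq ht (tilt_mem_Ioo (pow_pos (zero_lt_one.trans hq) (l + 1)) hε)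
  have := mul_le_mul_of_nonneg_left (le_max_right t (1 - R)) (by positivity : (0 : ℝ) ≤ l + 1)
  linarith

lemma isMaxOn_fobj_one_sub (hq : 1 < q) (hε : ε ∈ Ioo 0 1) (hεR : ε < 1 - R)
    (hR : 1 - R < tilt (q ^ (l + 1)) ε) :
    IsMaxOn (fobj q R ε l) (Ioo 0 1) (1 - R) := by
  refine isMaxOn_iff.2 fun t ht => ?_
  rcases le_total t (1 - R) with htR | htR
  · have htilt := tilt_mem_Ioo (pow_pos (zero_lt_one.trans hq) (l + 1)) hε
    have := klDivq_le_klDivq_of_mem_uIcc hq ht htilt (mem_uIcc.2 (.inr ⟨htR, hR.le⟩))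
    rw [fobj_eq_neg_klDivq_tilt hq hε, fobj_eq_neg_klDivq_tilt hq hε, max_eq_right htR, max_self]
    linarith
  · have := klDivq_le_klDivq_of_mem_uIcc hq ht hε (mem_uIcc.2 (.inl ⟨hεR.le, htR⟩))
    rw [fobj_eq_neg_klDivq, fobj_eq_neg_klDivq, max_eq_left (by linarith), sub_self, max_self]
    linarith

lemma isMaxOn_fobj_self (hq : 1 < q) (hε : ε ∈ Ioo 0 1) (hR : 1 - ε ≤ R) :
    IsMaxOn (fobj q R ε l) (Ioo 0 1) ε ∧ fobj q R ε l ε = 0 := by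
  have hfε : fobj q R ε l ε = 0 := by
    rw [fobj_eq_neg_klDivq, max_eq_left (by linarith), klDivq_self]; ring
  refine ⟨isMaxOn_iff.2 fun t ht => ?_, hfε⟩
  rw [hfε, fobj_eq_neg_klDivq]
  have := klDivq_nonneg hq ht hε
  have := mul_nonneg (by positivity : (0 : ℝ) ≤ l + 1) (le_max_left 0 (1 - R - t))
  linarith

end Objective

theorem stmt_13_general (q R ε : ℝ) (l : ℕ) (hq : 2 ≤ q)
    (hε0 : 0 < ε) (hε1 : ε < 1) :
    (R ≤ (1 - ε) / (1 + (q ^ (l + 1) - 1) * ε) →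
        IsMaxOn (fobj q R ε l) (Ioo (0 : ℝ) 1)
          (q ^ (l + 1) * ε / (1 + (q ^ (l + 1) - 1) * ε)))
    ∧ ((1 - ε) / (1 + (q ^ (l + 1) - 1) * ε) < R → R < 1 - ε →
        IsMaxOn (fobj q R ε l) (Ioo (0 : ℝ) 1) (1 - R))
    ∧ (1 - ε ≤ R →
        IsMaxOn (fobj q R ε l) (Ioo (0 : ℝ) 1) ε ∧ fobj q R ε l ε = 0) := by
  have hq1 : 1 < q := by linarith
  have hε : ε ∈ Ioo 0 1 := ⟨hε0, hε1⟩
  have hthreshold := one_sub_tilt (pow_pos (zero_lt_one.trans hq1) (l + 1)) hε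
  refine ⟨fun hR => ?_, fun hRlow hRhigh => ?_, isMaxOn_fobj_self hq1 hε⟩
  · exact isMaxOn_fobj_tilt hq1 hε (by linarith)
  · exact isMaxOn_fobj_one_sub hq1 hε (by linarith) (by linarith)

/-- The function `f` attains its supremum over `(0,1)`:
at `t₁ = q^{ℓ+1}ε/(1+(q^{ℓ+1}-1)ε)` when `0 < R ≤ (1-ε)/(1+(q^{ℓ+1}-1)ε)`;
at `t = 1-R` when `(1-ε)/(1+(q^{ℓ+1}-1)ε) < R < 1-ε`;
and at `t = ε` with `f(ε) = 0` when `1-ε ≤ R < 1`. -/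
theorem stmt_13 (q R ε : ℝ) (l : ℕ) (hq : 2 ≤ q)
    (hR0 : 0 < R) (hR1 : R < 1) (hε0 : 0 < ε) (hε1 : ε < 1) :
    (R ≤ (1 - ε) / (1 + (q ^ (l + 1) - 1) * ε) →
        IsMaxOn (fobj q R ε l) (Ioo (0 : ℝ) 1)
          (q ^ (l + 1) * ε / (1 + (q ^ (l + 1) - 1) * ε)))
    ∧ ((1 - ε) / (1 + (q ^ (l + 1) - 1) * ε) < R → R < 1 - ε →
        IsMaxOn (fobj q R ε l) (Ioo (0 : ℝ) 1) (1 - R))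
    ∧ (1 - ε ≤ R →
        IsMaxOn (fobj q R ε l) (Ioo (0 : ℝ) 1) ε ∧ fobj q R ε l ε = 0) :=
  stmt_13_general q R ε l hq hε0 hε1
end

section
/- For fixed 0 < R < 1, 0 < ε < 1 and q ≥ 2, if 0 < R ≤ (1−ε)/(1+(q^{ℓ+1}−1)ε), then the value of −f at its maximizer t₁ = q^{ℓ+1}ε/(1+(q^{ℓ+1}−1)ε) equals (ℓ+1)(1−R) − log_q(1+(q^{ℓ+1}−1)ε), where f(t) = −(ℓ+1)(1−R−t) + h(t) + t log_q ε + (1−t) log_q(1−ε) and h is the q-ary binary entropy. -/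
/-!
At the maximizer the exponent `t₁` is the tilted probability `Qε / (Qε + (1 - ε))` with
`Q = q^{ℓ+1}`. The entropy of such a normalized pair `a / (a + c)` is
`log(a + c) - (a log a + c log c) / (a + c)`, so the terms `t log ε + (1 - t) log (1 - ε)` cancel
against it except for `-t log_q Q = -(ℓ + 1) t`, which in turn cancels the `t`-part of the
linear term `(ℓ + 1)(1 - R - t)`.
-/

theorem one_sub_div_add_self {a c : ℝ} (h : a + c ≠ 0) : 1 - a / (a + c) = c / (a + c) := by
  rw [one_sub_div h, add_sub_cancel_left]

theorem entq_div_add (b : ℝ) {a c : ℝ} (ha : 0 < a) (hc : 0 < c) :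
    entq b (a / (a + c)) =
      Real.logb b (a + c) - a / (a + c) * Real.logb b a - c / (a + c) * Real.logb b c := by
  have hac : a + c ≠ 0 := (add_pos ha hc).ne'
  have hsum : a / (a + c) + c / (a + c) = 1 := by rw [← add_div, div_self hac]
  rw [entq, one_sub_div_add_self hac, Real.logb_div ha.ne' hac, Real.logb_div hc.ne' hac]
  linear_combination Real.logb b (a + c) * hsum

theorem stmt_14_general (q R ε : ℝ) (l : ℕ) (hq : 2 ≤ q)
    (hε0 : 0 < ε) (hε1 : ε < 1) :
    -(-((l : ℝ) + 1) * (1 - R - q ^ (l + 1) * ε / (1 + (q ^ (l + 1) - 1) * ε))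
        + entq q (q ^ (l + 1) * ε / (1 + (q ^ (l + 1) - 1) * ε))
        + (q ^ (l + 1) * ε / (1 + (q ^ (l + 1) - 1) * ε)) * Real.logb q ε
        + (1 - q ^ (l + 1) * ε / (1 + (q ^ (l + 1) - 1) * ε)) * Real.logb q (1 - ε))
      = ((l : ℝ) + 1) * (1 - R) - Real.logb q (1 + (q ^ (l + 1) - 1) * ε) := by
  have hq1 : 1 < q := by linarith
  have hQ : 0 < q ^ (l + 1) := by positivity
  have hlogQ : Real.logb q (q ^ (l + 1)) = l + 1 := by
    rw [Real.logb_pow, Real.logb_self_eq_one hq1]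
    push_cast
    ring
  have hD : 1 + (q ^ (l + 1) - 1) * ε = q ^ (l + 1) * ε + (1 - ε) := by ring
  have hε' : 0 < 1 - ε := by linarith
  rw [hD, entq_div_add q (mul_pos hQ hε0) hε',
    one_sub_div_add_self (add_pos (mul_pos hQ hε0) hε').ne',
    Real.logb_mul hQ.ne' hε0.ne', hlogQ]
  ring

/-- If `0 < R ≤ (1-ε)/(1+(q^{ℓ+1}-1)ε)`, then at the maximizer
`t₁ = q^{ℓ+1}ε/(1+(q^{ℓ+1}-1)ε)` the value of `-f` equals
`(ℓ+1)(1-R) - log_q(1+(q^{ℓ+1}-1)ε)`, where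
`f(t) = -(ℓ+1)(1-R-t) + h(t) + t log_q ε + (1-t) log_q(1-ε)`. -/
theorem stmt_14 (q R ε : ℝ) (l : ℕ) (hq : 2 ≤ q)
    (hR0 : 0 < R) (hR1 : R < 1) (hε0 : 0 < ε) (hε1 : ε < 1)
    (hR : R ≤ (1 - ε) / (1 + (q ^ (l + 1) - 1) * ε)) :
    -(-((l : ℝ) + 1) * (1 - R - q ^ (l + 1) * ε / (1 + (q ^ (l + 1) - 1) * ε))
        + entq q (q ^ (l + 1) * ε / (1 + (q ^ (l + 1) - 1) * ε))
        + (q ^ (l + 1) * ε / (1 + (q ^ (l + 1) - 1) * ε)) * Real.logb q ε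
        + (1 - q ^ (l + 1) * ε / (1 + (q ^ (l + 1) - 1) * ε)) * Real.logb q (1 - ε))
      = ((l : ℝ) + 1) * (1 - R) - Real.logb q (1 + (q ^ (l + 1) - 1) * ε) :=
  stmt_14_general q R ε l hq hε0 hε1
end

section
/- For 0 < R < 1, 0 < ε < 1 and q ≥ 2, with κ₀ = 1 − R − (√(4R(1−R)(q−1)+1) − 1)/(2(q−1)), the quantity (1−R)·log_q(κ₀/ε²) + R·log_q((2R−1+κ₀)/(1−ε)²) is strictly positive. -/
/-!
Since `√(1 + 4x) < 1 + 2x` for `x > 0`, taking `x = R(1-R)(q-1)` gives `κ₀ > (1-R)²`, hence also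
`2R - 1 + κ₀ > R²`. As `log_q` is strictly increasing, the quantity therefore exceeds
`2((1-R) log_q((1-R)/ε) + R log_q(R/(1-ε)))`, twice the binary relative entropy of `(1-R, R)`
with respect to `(ε, 1-ε)`, which is nonnegative by Gibbs' inequality.
-/

open Real

lemma sqrt_four_mul_add_one_lt {x : ℝ} (hx : 0 < x) : √(4 * x + 1) < 2 * x + 1 := by
  rw [sqrt_lt' (by linarith)]
  nlinarith

noncomputable def kappa0 (q R : ℝ) : ℝ :=
  1 - R - (√(4 * R * (1 - R) * (q - 1) + 1) - 1) / (2 * (q - 1))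

lemma sq_one_sub_lt_kappa0 {q R : ℝ} (hq : 1 < q) (hR0 : 0 < R) (hR1 : R < 1) :
    (1 - R) ^ 2 < kappa0 q R := by
  have hx : 0 < R * (1 - R) * (q - 1) := by
    have : 0 < 1 - R := by linarith
    have : 0 < q - 1 := by linarith
    positivity
  have hsqrt := sqrt_four_mul_add_one_lt hx
  rw [← mul_assoc, ← mul_assoc] at hsqrt
  have hfrac : (√(4 * R * (1 - R) * (q - 1) + 1) - 1) / (2 * (q - 1)) < R * (1 - R) := by
    rw [div_lt_iff₀ (by linarith)]
    linarith
  unfold kappa0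
  nlinarith

/-- Gibbs' inequality for two-point distributions. -/
lemma mul_log_add_mul_log_one_sub_le {R ε : ℝ} (hR0 : 0 < R) (hR1 : R < 1)
    (hε0 : 0 < ε) (hε1 : ε < 1) :
    (1 - R) * log ε + R * log (1 - ε) ≤ (1 - R) * log (1 - R) + R * log R := by
  have hR1' : 0 < 1 - R := by linarith
  have hε1' : 0 < 1 - ε := by linarith
  have h₁ : (1 - R) * (log ε - log (1 - R)) ≤ ε - (1 - R) := by
    have := log_le_sub_one_of_pos (div_pos hε0 hR1')
    rw [log_div hε0.ne' hR1'.ne'] at this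
    calc (1 - R) * (log ε - log (1 - R)) ≤ (1 - R) * (ε / (1 - R) - 1) := by gcongr
      _ = ε - (1 - R) := by field_simp
  have h₂ : R * (log (1 - ε) - log R) ≤ (1 - ε) - R := by
    have := log_le_sub_one_of_pos (div_pos hε1' hR0)
    rw [log_div hε1'.ne' hR0.ne'] at this
    calc R * (log (1 - ε) - log R) ≤ R * ((1 - ε) / R - 1) := by gcongr
      _ = (1 - ε) - R := by field_simp
  linarith

lemma logb_sq_div_add_logb_sq_div_nonneg {q R ε : ℝ} (hq : 1 ≤ q) (hR0 : 0 < R) (hR1 : R < 1)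
    (hε0 : 0 < ε) (hε1 : ε < 1) :
    0 ≤ (1 - R) * logb q ((1 - R) ^ 2 / ε ^ 2) + R * logb q (R ^ 2 / (1 - ε) ^ 2) := by
  have hR1' : 0 < 1 - R := by linarith
  have hε1' : 0 < 1 - ε := by linarith
  have hgibbs := mul_log_add_mul_log_one_sub_le hR0 hR1 hε0 hε1
  have hexpand : (1 - R) * logb q ((1 - R) ^ 2 / ε ^ 2) + R * logb q (R ^ 2 / (1 - ε) ^ 2) =
      2 * ((1 - R) * log (1 - R) + R * log R - ((1 - R) * log ε + R * log (1 - ε))) / log q := by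
    simp only [logb, log_div (pow_pos hR1' 2).ne' (pow_pos hε0 2).ne',
      log_div (pow_pos hR0 2).ne' (pow_pos hε1' 2).ne', log_pow]
    push_cast
    ring
  rw [hexpand]
  exact div_nonneg (by linarith) (log_nonneg hq)

lemma logb_div_sq_add_logb_div_sq_pos {q R ε a b : ℝ} (hq : 1 < q) (hR0 : 0 < R) (hR1 : R < 1)
    (hε0 : 0 < ε) (hε1 : ε < 1) (ha : (1 - R) ^ 2 < a) (hb : R ^ 2 < b) :
    0 < (1 - R) * logb q (a / ε ^ 2) + R * logb q (b / (1 - ε) ^ 2) := by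
  have hR1' : 0 < 1 - R := by linarith
  have hε1' : 0 < 1 - ε := by linarith
  have h₁ : logb q ((1 - R) ^ 2 / ε ^ 2) < logb q (a / ε ^ 2) :=
    logb_lt_logb hq (by positivity) (by gcongr)
  have h₂ : logb q (R ^ 2 / (1 - ε) ^ 2) < logb q (b / (1 - ε) ^ 2) :=
    logb_lt_logb hq (by positivity) (by gcongr)
  have := logb_sq_div_add_logb_sq_div_nonneg hq.le hR0 hR1 hε0 hε1
  nlinarith [mul_lt_mul_of_pos_left h₁ hR1', mul_lt_mul_of_pos_left h₂ hR0]

/-- For `0 < R < 1`, `0 < ε < 1`, `q ≥ 2` and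
`κ₀ = 1 - R - (√(4R(1-R)(q-1)+1) - 1)/(2(q-1))`, the quantity
`(1-R) log_q(κ₀/ε²) + R log_q((2R-1+κ₀)/(1-ε)²)` is strictly positive. -/
theorem stmt_16 (q R ε : ℝ) (hq : 2 ≤ q) (hR0 : 0 < R) (hR1 : R < 1)
    (hε0 : 0 < ε) (hε1 : ε < 1) :
    0 < (1 - R) * Real.logb q
          ((1 - R - (Real.sqrt (4 * R * (1 - R) * (q - 1) + 1) - 1) / (2 * (q - 1)))
            / ε ^ 2)
        + R * Real.logb q
          ((2 * R - 1
              + (1 - R - (Real.sqrt (4 * R * (1 - R) * (q - 1) + 1) - 1) / (2 * (q - 1))))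
            / (1 - ε) ^ 2) := by
  have hq1 : 1 < q := by linarith
  have hκ : (1 - R) ^ 2 < kappa0 q R := sq_one_sub_lt_kappa0 hq1 hR0 hR1
  have hκ' : R ^ 2 < 2 * R - 1 + kappa0 q R := by nlinarith
  exact logb_div_sq_add_logb_div_sq_pos hq1 hR0 hR1 hε0 hε1 hκ hκ'
end

section
/- For q ∈ {2,3,4} and 0 < ε < 1, the function Q(ε) = −qε/(1+(q−1)ε) − log_q(1+(q−1)ε²) + 2·log_q(1+(q−1)ε) is strictly positive. -/
/-!
Multiplied by `log q`, `Q` becomes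
`f(x) = 2 log(1 + (q-1)x) - log(1 + (q-1)x²) - log q · qx/(1 + (q-1)x)`,
which vanishes at `0` and `1`. Its derivative is `P(x) / ((1 + (q-1)x)² (1 + (q-1)x²))` with `P` a
quadratic with negative leading coefficient and `P(0) = 2(q-1) - q log q`, which is positive for
`q = 2, 3, 4`. So `P` changes sign at most once on `(0, ∞)`, from positive to negative: `f` first increases
and then decreases on `[0, 1]`, hence is positive inside.
-/

open Real Set

-- `hf'`: the sign of `f'` changes at most once, from positive to negative.
theorem pos_of_hasDerivAt_of_pos_left {f f' : ℝ → ℝ} {a b ε : ℝ}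
    (hf : ∀ x ∈ Icc a b, HasDerivAt f (f' x) x) (ha : f a = 0) (hb : f b = 0)
    (hf' : ∀ x ∈ Ioo a b, ∀ y ∈ Ioo a b, y < x → 0 ≤ f' x → 0 < f' y)
    (hε : ε ∈ Ioo a b) : 0 < f ε := by
  have hcont : ∀ c d, a ≤ c → d ≤ b → ContinuousOn f (Icc c d) := fun c d hc hd x hx =>
    (hf x ⟨hc.trans hx.1, hx.2.trans hd⟩).continuousAt.continuousWithinAt
  have hderiv : ∀ c d, a ≤ c → d ≤ b → ∀ x ∈ interior (Icc c d),
      HasDerivWithinAt f (f' x) (interior (Icc c d)) x := fun c d hc hd x hx => by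
    rw [interior_Icc] at hx
    exact (hf x ⟨hc.trans hx.1.le, hx.2.le.trans hd⟩).hasDerivWithinAt
  rcases lt_or_ge 0 (f' ε) with hpos | hnonpos
  · have hmono : StrictMonoOn f (Icc a ε) :=
      strictMonoOn_of_hasDerivWithinAt_pos (convex_Icc a ε) (hcont a ε le_rfl hε.2.le)
        (hderiv a ε le_rfl hε.2.le) fun y hy => by
          rw [interior_Icc] at hy
          exact hf' ε hε y ⟨hy.1, hy.2.trans hε.2⟩ hy.2 hpos.le
    simpa [ha] using hmono (left_mem_Icc.2 hε.1.le) (right_mem_Icc.2 hε.1.le) hε.1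
  · have hanti : StrictAntiOn f (Icc ε b) :=
      strictAntiOn_of_hasDerivWithinAt_neg (convex_Icc ε b) (hcont ε b hε.1.le le_rfl)
        (hderiv ε b hε.1.le le_rfl) fun x hx => by
          rw [interior_Icc] at hx
          by_contra! h
          exact (hf' x ⟨hε.1.trans hx.1, hx.2⟩ ε hε hx.1 h).not_ge hnonpos
    simpa [hb] using hanti (left_mem_Icc.2 hε.2.le) (right_mem_Icc.2 hε.2.le) hε.2

theorem quadratic_pos_of_lt {c b k x y : ℝ} (hc : 0 < c) (hk : 0 ≤ k) (hy : 0 ≤ y)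
    (hyx : y < x) (hx : 0 ≤ c + b * x - k * x ^ 2) : 0 < c + b * y - k * y ^ 2 := by
  have key : x * (c + b * y - k * y ^ 2)
      = y * (c + b * x - k * x ^ 2) + (x - y) * (c + k * x * y) := by ring
  have hx0 : 0 < x := hy.trans_lt hyx
  refine pos_of_mul_pos_right (key ▸ ?_) hx0.le
  exact add_pos_of_nonneg_of_pos (mul_nonneg hy hx) (mul_pos (sub_pos.2 hyx) (by positivity))

/-- `Q(x) · log q`. -/
noncomputable def scaledQ (q x : ℝ) : ℝ :=
  2 * log (1 + (q - 1) * x) - log (1 + (q - 1) * x ^ 2) - log q * (q * x / (1 + (q - 1) * x))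

theorem scaledQ_zero (q : ℝ) : scaledQ q 0 = 0 := by simp [scaledQ]

theorem scaledQ_one {q : ℝ} (hq : q ≠ 0) : scaledQ q 1 = 0 := by
  simp only [scaledQ, mul_one, one_pow, add_sub_cancel, div_self hq]
  ring

theorem hasDerivAt_scaledQ {q x : ℝ} (hq : 1 ≤ q) (hx : 0 ≤ x) :
    HasDerivAt (scaledQ q)
      (((2 * (q - 1) - q * log q) + (2 * (q - 1) ^ 2 - 2 * (q - 1)) * x
          - (2 * (q - 1) ^ 2 + q * log q * (q - 1)) * x ^ 2)
        / ((1 + (q - 1) * x) ^ 2 * (1 + (q - 1) * x ^ 2))) x := by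
  have hu : 0 < 1 + (q - 1) * x := by nlinarith
  have hv : 0 < 1 + (q - 1) * x ^ 2 := by nlinarith
  have du : HasDerivAt (fun y => 1 + (q - 1) * y) (q - 1) x := by
    simpa using ((hasDerivAt_id x).const_mul (q - 1)).const_add 1
  have dv : HasDerivAt (fun y => 1 + (q - 1) * y ^ 2) ((q - 1) * (2 * x)) x := by
    simpa using ((hasDerivAt_pow 2 x).const_mul (q - 1)).const_add 1
  have dw : HasDerivAt (fun y => q * y) q x := by simpa using (hasDerivAt_id x).const_mul q
  refine (((du.log hu.ne').const_mul 2).sub (dv.log hv.ne')).sub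
    ((dw.div du hu.ne').const_mul (log q)) |>.congr_deriv ?_
  field_simp
  ring

theorem scaledQ_pos {q ε : ℝ} (hq : 1 < q) (hlog : q * log q < 2 * (q - 1)) (hε : ε ∈ Ioo 0 1) :
    0 < scaledQ q ε := by
  refine pos_of_hasDerivAt_of_pos_left (fun x hx => hasDerivAt_scaledQ hq.le hx.1)
    (scaledQ_zero q) (scaledQ_one (by positivity)) (fun x hx y hy hyx hPx => ?_) hε
  have ha : 0 < q - 1 := sub_pos.2 hq
  have hL : 0 < log q := log_pos hq
  have hden : ∀ z, 0 < z → 0 < (1 + (q - 1) * z) ^ 2 * (1 + (q - 1) * z ^ 2) := fun z hz => by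
    positivity
  refine div_pos (quadratic_pos_of_lt (by linarith) (by positivity) hy.1.le hyx ?_) (hden y hy.1)
  simpa using (le_div_iff₀ (hden x hx.1)).1 hPx

theorem mul_log_lt_two_mul_sub_one {q : ℝ} (hq : q = 2 ∨ q = 3 ∨ q = 4) :
    q * log q < 2 * (q - 1) := by
  rcases hq with rfl | rfl | rfl
  · linarith [log_two_lt_d9]
  · linarith [log_three_lt_d9]
  · have : log 4 = 2 * log 2 := by
      rw [show (4 : ℝ) = 2 ^ 2 by norm_num, log_pow]
      norm_num
    linarith [log_two_lt_d9]

theorem Q_eq_scaledQ_div_log {q : ℝ} (hq : log q ≠ 0) (x : ℝ) :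
    -(q * x) / (1 + (q - 1) * x) - logb q (1 + (q - 1) * x ^ 2) + 2 * logb q (1 + (q - 1) * x)
      = scaledQ q x / log q := by
  simp only [logb, scaledQ]
  field_simp
  ring

/-- For `q ∈ {2,3,4}` and `0 < ε < 1`, the function
`Q(ε) = -qε/(1+(q-1)ε) - log_q(1+(q-1)ε²) + 2 log_q(1+(q-1)ε)` is strictly positive. -/
theorem stmt_17 (q ε : ℝ) (hq : q = 2 ∨ q = 3 ∨ q = 4) (hε0 : 0 < ε) (hε1 : ε < 1) :
    0 < -(q * ε) / (1 + (q - 1) * ε) - Real.logb q (1 + (q - 1) * ε ^ 2)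
        + 2 * Real.logb q (1 + (q - 1) * ε) := by
  have hq1 : 1 < q := by rcases hq with rfl | rfl | rfl <;> norm_num
  rw [Q_eq_scaledQ_div_log (log_pos hq1).ne']
  exact div_pos (scaledQ_pos hq1 (mul_log_lt_two_mul_sub_one hq) ⟨hε0, hε1⟩) (log_pos hq1)
end
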